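/- arXiv:2212.08491 — 8 statements merged into one kernel-verified Lean document; each statement's English description precedes it below -/
import Mathlib

section
/- The Buratti array is globally simple: for each fixed i with 0 ≤ i ≤ m−1, the left-to-right partial sums of row i, namely s_j = Σ_{t=0}^{j} ε^i ξ^t for j = 0,…,n−1, are pairwise distinct elements of F; and for each fixed j with 0 ≤ j ≤ n−1, the top-to-bottom partial sums of column j, namely s_i = Σ_{t=0}^{i} ε^t ξ^j for i = 0,…,m−1, are pairwise distinct elements of F. -/
/-!
Each row (column) of the Buratti array is a nonzero constant times `1, x, x², …` with `x = ξ`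
(`x = ε`) of order `n` (`m`). By the geometric sum formula, equal partial sums of lengths `j + 1`
and `k + 1` force `x ^ (j + 1) = x ^ (k + 1)`, hence `j = k` as both are less than `orderOf x`.
-/

open Finset

theorem ne_zero_of_orderOf_pos {M₀ : Type*} [MonoidWithZero M₀] [Nontrivial M₀] {x : M₀}
    (hx : 0 < orderOf x) : x ≠ 0 :=
  (orderOf_pos_iff.mp hx).isUnit.ne_zero

section GeomSum

variable {K : Type*} [DivisionRing K] {x : K}

theorem geom_sum_range_succ_injOn (hx : 1 < orderOf x) :
    Set.InjOn (fun j ↦ ∑ t ∈ range (j + 1), x ^ t) (Set.Iio (orderOf x)) := by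
  intro j hj k hk h
  have hx1 : x ≠ 1 := by rintro rfl; simp at hx
  have hpow : x ^ (j + 1) = x ^ (k + 1) := by
    simpa [geom_sum_eq hx1, div_left_inj' (sub_ne_zero.2 hx1)] using h
  rw [pow_succ', pow_succ'] at hpow
  exact pow_injOn_Iio_orderOf hj hk (mul_left_cancel₀ (ne_zero_of_orderOf_pos (by omega)) hpow)

theorem mul_geom_sum_range_succ_injOn {c : K} (hc : c ≠ 0) (hx : 1 < orderOf x) :
    Set.InjOn (fun j ↦ ∑ t ∈ range (j + 1), c * x ^ t) (Set.Iio (orderOf x)) := by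
  intro j hj k hk h
  simp only [← mul_sum] at h
  exact geom_sum_range_succ_injOn hx hj hk (mul_left_cancel₀ hc h)

theorem geom_sum_mul_range_succ_injOn {c : K} (hc : c ≠ 0) (hx : 1 < orderOf x) :
    Set.InjOn (fun j ↦ ∑ t ∈ range (j + 1), x ^ t * c) (Set.Iio (orderOf x)) := by
  intro j hj k hk h
  simp only [← sum_mul] at h
  exact geom_sum_range_succ_injOn hx hj hk (mul_right_cancel₀ hc h)

end GeomSum

theorem buratti_array_globally_simple_general
    (m n : ℕ) (hm : 3 ≤ m) (hn : 3 ≤ n)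
    (F : Type*) [Field F]
    (ε ξ : F) (hε : orderOf ε = m) (hξ : orderOf ξ = n) :
    (∀ i < m, ∀ j₁ < n, ∀ j₂ < n,
      (∑ t ∈ Finset.range (j₁ + 1), ε ^ i * ξ ^ t) =
        (∑ t ∈ Finset.range (j₂ + 1), ε ^ i * ξ ^ t) → j₁ = j₂) ∧
    (∀ j < n, ∀ i₁ < m, ∀ i₂ < m,
      (∑ t ∈ Finset.range (i₁ + 1), ε ^ t * ξ ^ j) =
        (∑ t ∈ Finset.range (i₂ + 1), ε ^ t * ξ ^ j) → i₁ = i₂) := by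
  subst hε hξ
  have hε0 : ε ≠ 0 := ne_zero_of_orderOf_pos (by omega)
  have hξ0 : ξ ≠ 0 := ne_zero_of_orderOf_pos (by omega)
  exact ⟨fun i _ j₁ hj₁ j₂ hj₂ h ↦
      mul_geom_sum_range_succ_injOn (pow_ne_zero i hε0) (by omega) hj₁ hj₂ h,
    fun j _ i₁ hi₁ i₂ hi₂ h ↦
      geom_sum_mul_range_succ_injOn (pow_ne_zero j hξ0) (by omega) hi₁ hi₂ h⟩

/-- The Buratti array is globally simple: for each row `i`, the left-to-right
partial sums `s_j = Σ_{t=0}^{j} ε^i ξ^t` (for `j = 0,…,n−1`) are pairwise distinct, and for each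
column `j`, the top-to-bottom partial sums `s_i = Σ_{t=0}^{i} ε^t ξ^j` (for `i = 0,…,m−1`) are
pairwise distinct. -/
theorem buratti_array_globally_simple
    (m n : ℕ) (hm : 3 ≤ m) (hn : 3 ≤ n) (hmo : Odd m) (hno : Odd n)
    (hcop : Nat.Coprime m n)
    (F : Type*) [Field F] [Fintype F] (hcard : Fintype.card F = 2 * m * n + 1)
    (ε ξ : F) (hε : orderOf ε = m) (hξ : orderOf ξ = n) :
    (∀ i < m, ∀ j₁ < n, ∀ j₂ < n,
      (∑ t ∈ Finset.range (j₁ + 1), ε ^ i * ξ ^ t) =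
        (∑ t ∈ Finset.range (j₂ + 1), ε ^ i * ξ ^ t) → j₁ = j₂) ∧
    (∀ j < n, ∀ i₁ < m, ∀ i₂ < m,
      (∑ t ∈ Finset.range (i₁ + 1), ε ^ t * ξ ^ j) =
        (∑ t ∈ Finset.range (i₂ + 1), ε ^ t * ξ ^ j) → i₁ = i₂) :=
  buratti_array_globally_simple_general m n hm hn F ε ξ hε hξ
end

section
/- Let m, n be positive integers with mn ≥ 2 such that at least one of m and n is odd, and let ℓ be an integer with 0 ≤ ℓ ≤ m such that |m − 2ℓ| and n are coprime. On the set (Z/mZ) × (Z/nZ) of cells of a totally filled m × n array, define the permutations ω_c(i,j) = (i+1, j) and ω_r(i,j) = (i, j+1) if the representative of i lies in {0,…,m−ℓ−1} and ω_r(i,j) = (i, j−1) otherwise (i.e., rows are ordered left to right for the first m−ℓ rows and right to left for the remaining ℓ rows, columns top to bottom). Then the permutation ω_c ∘ ω_r is a single cycle of length mn, that is, the orbit of every cell under ω_c ∘ ω_r is all of (Z/mZ) × (Z/nZ). -/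
/-!
Writing `d i = ±1` for the direction of row `i`, the permutation `ωc ∘ ωr` is the skew shift
`(i, j) ↦ (i + 1, j + d i)`. One trip through all `m` rows returns to the starting row and moves
the column by `∑ d = (m - ℓ) - ℓ = m - 2ℓ`, a unit modulo `n`; so repeating full trips reaches
every column of a row, and a partial trip reaches every row.
-/

open Finset

namespace ZMod

variable {m : ℕ} [NeZero m] {M : Type*} [AddCommMonoid M]

theorem sum_univ_eq_sum_range (f : ZMod m → M) : ∑ x, f x = ∑ t ∈ range m, f t :=
  sum_nbij' val Nat.cast (fun x _ => mem_range.2 x.val_lt) (fun _ _ => mem_univ _)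
    (fun x _ => natCast_zmod_val x) (fun _ ht => val_cast_of_lt (mem_range.1 ht))
    (fun x _ => by rw [natCast_zmod_val])

theorem sum_range_add_natCast (f : ZMod m → M) (i : ZMod m) :
    ∑ t ∈ range m, f (i + t) = ∑ x, f x := by
  rw [← sum_univ_eq_sum_range (fun x => f (i + x))]
  exact Equiv.sum_comp (Equiv.addLeft i) f

theorem sum_ite_val_lt {a : ℕ} (ha : a ≤ m) (u v : M) :
    ∑ x : ZMod m, (if x.val < a then u else v) = a • u + (m - a) • v := by
  rw [sum_univ_eq_sum_range, range_eq_Ico, ← sum_Ico_consecutive _ (Nat.zero_le a) ha]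
  have hval {t : ℕ} (ht : t < m) : (t : ZMod m).val = t := val_cast_of_lt ht
  rw [sum_congr rfl fun t ht => if_pos (by rw [mem_Ico] at ht; rw [hval (by omega)]; omega),
    sum_congr rfl fun t ht => if_neg (by rw [mem_Ico] at ht; rw [hval (by omega)]; omega)]
  simp only [sum_const, Nat.card_Ico, Nat.sub_zero]

theorem exists_nsmul_eq_of_isUnit {n : ℕ} [NeZero n] {a : ZMod n} (ha : IsUnit a) (b : ZMod n) :
    ∃ k : ℕ, k • a = b :=
  ⟨(b * a⁻¹).val, by rw [nsmul_eq_mul, natCast_zmod_val, mul_assoc, inv_mul_of_unit a ha, mul_one]⟩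

end ZMod

def skewShift {m : ℕ} {G : Type*} [Add G] (d : ZMod m → G) (c : ZMod m × G) : ZMod m × G :=
  (c.1 + 1, c.2 + d c.1)

section SkewShift

variable {m : ℕ} {G : Type*} [AddCommMonoid G] (d : ZMod m → G)

theorem skewShift_iterate_apply (k : ℕ) (i : ZMod m) (j : G) :
    (skewShift d)^[k] (i, j) = (i + k, j + ∑ t ∈ range k, d (i + t)) := by
  induction k generalizing i j with
  | zero => simp
  | succ k ih =>
    rw [Function.iterate_succ_apply, skewShift, ih, sum_range_succ', Nat.cast_zero, add_zero]
    simp only [Nat.cast_succ, add_assoc, add_comm (1 : ZMod m), add_comm (d i)]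

variable [NeZero m]

theorem skewShift_iterate_period : (skewShift d)^[m] = Prod.map id (· + ∑ x, d x) := by
  funext ⟨i, j⟩
  rw [skewShift_iterate_apply, ZMod.natCast_self, add_zero, ZMod.sum_range_add_natCast]
  rfl

theorem skewShift_iterate_mul_apply (k : ℕ) (c : ZMod m × G) :
    (skewShift d)^[m * k] c = (c.1, c.2 + k • ∑ x, d x) := by
  rw [Function.iterate_mul, skewShift_iterate_period, Prod.map_iterate, Function.iterate_id,
    add_right_iterate]
  rfl

end SkewShift

theorem exists_skewShift_iterate_eq {m : ℕ} [NeZero m] {G : Type*} [AddCommGroup G]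
    (d : ZMod m → G) (hd : ∀ g : G, ∃ k : ℕ, k • ∑ x, d x = g) (c c' : ZMod m × G) :
    ∃ k : ℕ, (skewShift d)^[k] c = c' := by
  obtain ⟨i, j⟩ := c
  obtain ⟨i', j'⟩ := c'
  set s := ∑ t ∈ range (i' - i).val, d (i + t)
  have hrow : (skewShift d)^[(i' - i).val] (i, j) = (i', j + s) := by
    rw [skewShift_iterate_apply, ZMod.natCast_zmod_val, add_sub_cancel]
  obtain ⟨k, hk⟩ := hd (j' - (j + s))
  refine ⟨m * k + (i' - i).val, ?_⟩
  rw [Function.iterate_add_apply, hrow, skewShift_iterate_mul_apply, hk, add_sub_cancel]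

theorem compatible_orderings_totally_filled_general
    (m n : ℕ) (hm : 0 < m) (hn : 0 < n)
    (ℓ : ℕ) (hℓ : ℓ ≤ m) (hcop : Nat.Coprime ((m : ℤ) - 2 * ℓ).natAbs n)
    (ωc ωr : ZMod m × ZMod n → ZMod m × ZMod n)
    (hωc : ∀ c, ωc c = (c.1 + 1, c.2))
    (hωr : ∀ c, ωr c = if c.1.val < m - ℓ then (c.1, c.2 + 1) else (c.1, c.2 - 1)) :
    ∀ c c' : ZMod m × ZMod n, ∃ k : ℕ, (ωc ∘ ωr)^[k] c = c' := by
  have : NeZero m := ⟨hm.ne'⟩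
  have : NeZero n := ⟨hn.ne'⟩
  set d : ZMod m → ZMod n := fun i => if i.val < m - ℓ then 1 else -1
  have hskew : ωc ∘ ωr = skewShift d := by
    funext c
    simp only [Function.comp_apply, hωr, skewShift, d]
    split_ifs <;> simp [hωc, sub_eq_add_neg]
  have hsum : ∑ x, d x = (((m : ℤ) - 2 * ℓ : ℤ) : ZMod n) := by
    rw [ZMod.sum_ite_val_lt (Nat.sub_le m ℓ), Nat.sub_sub_self hℓ, nsmul_one, smul_neg, nsmul_one,
      Nat.cast_sub hℓ]
    push_cast
    ring
  have hunit : IsUnit (∑ x, d x) := by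
    rw [hsum, ZMod.coe_int_isUnit_iff_isCoprime, isCoprime_comm, Int.isCoprime_iff_gcd_eq_one]
    exact hcop
  rw [hskew]
  exact exists_skewShift_iterate_eq d (ZMod.exists_nsmul_eq_of_isUnit hunit)

/-- Let `m, n` be positive integers with `mn ≥ 2`, at least one of `m` and `n`
odd, and let `ℓ ≤ m` be such that `|m − 2ℓ|` and `n` are coprime.  On the cells
`(ZMod m) × (ZMod n)` of a totally filled `m × n` array, let `ωc (i,j) = (i+1, j)` and let
`ωr (i,j) = (i, j+1)` if the representative of `i` lies in `{0,…,m−ℓ−1}`, and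
`ωr (i,j) = (i, j−1)` otherwise.  Then `ωc ∘ ωr` is a single cycle of length `mn`: the orbit of
every cell under `ωc ∘ ωr` is all of `(ZMod m) × (ZMod n)`. -/
theorem compatible_orderings_totally_filled
    (m n : ℕ) (hm : 0 < m) (hn : 0 < n) (hmn : 2 ≤ m * n)
    (hodd : Odd m ∨ Odd n)
    (ℓ : ℕ) (hℓ : ℓ ≤ m) (hcop : Nat.Coprime ((m : ℤ) - 2 * ℓ).natAbs n)
    (ωc ωr : ZMod m × ZMod n → ZMod m × ZMod n)
    (hωc : ∀ c, ωc c = (c.1 + 1, c.2))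
    (hωr : ∀ c, ωr c = if c.1.val < m - ℓ then (c.1, c.2 + 1) else (c.1, c.2 - 1)) :
    ∀ c c' : ZMod m × ZMod n, ∃ k : ℕ, (ωc ∘ ωr)^[k] c = c' :=
  compatible_orderings_totally_filled_general m n hm hn ℓ hℓ hcop ωc ωr hωc hωr
end

section
/- The map ρ₀ : F \ {0} → F \ {0} defined by ρ₀(a) = −ξa if a ∈ H and ρ₀(a) = −εa if a ∉ H is a well-defined permutation of F \ {0} which is a single cycle of length 2mn (equivalently, the orbit of every nonzero element of F under ρ₀ is all of F \ {0}). -/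
private lemma aux_pow_inj {F : Type*} [Field F] {a : F} {M N i i' : ℕ} (ha : a ≠ 0)
    (hcop : Nat.Coprime M N) (hord : orderOf a = M)
    (hi : i < M) (hi' : i' < M) (h : a ^ (i * N) = a ^ (i' * N)) : i = i' := by
  wlog hle : i ≤ i' generalizing i i'
  · exact (this hi' hi h.symm (le_of_not_ge hle)).symm
  have hpow : a ^ ((i' - i) * N) = 1 := by
    have h1 : a ^ (i * N) * a ^ ((i' - i) * N) = a ^ (i * N) * 1 := by
      rw [mul_one, ← pow_add, ← Nat.add_mul, Nat.add_sub_cancel' hle, ← h]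
    exact mul_left_cancel₀ (pow_ne_zero _ ha) h1
  have hdvd : M ∣ (i' - i) * N := hord ▸ orderOf_dvd_of_pow_eq_one hpow
  have hdvd' : M ∣ i' - i := hcop.dvd_of_dvd_mul_right hdvd
  have := Nat.eq_zero_of_dvd_of_lt hdvd' (by omega)
  · omega
  
/-- With `H = {ε^i ξ^j : 0 ≤ i ≤ m−1, 0 ≤ j ≤ n−1}`, the map
`ρ₀ : F \ {0} → F \ {0}` defined by `ρ₀(a) = −ξa` if `a ∈ H` and `ρ₀(a) = −εa` if `a ∉ H`
is a well-defined permutation of `F \ {0}` which is a single cycle of length `2mn`: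
the orbit of every nonzero element of `F` under `ρ₀` is all of `F \ {0}`. -/
theorem archdeacon_rotation_is_full_cycle
    (m n : ℕ) (hm : 3 ≤ m) (hn : 3 ≤ n) (hmo : Odd m) (hno : Odd n)
    (hcop : Nat.Coprime m n)
    (F : Type*) [Field F] [Fintype F] (hcard : Fintype.card F = 2 * m * n + 1)
    (ε ξ : F) (hε : orderOf ε = m) (hξ : orderOf ξ = n)
    (H : Set F) (hH : ∀ x : F, x ∈ H ↔ ∃ i < m, ∃ j < n, x = ε ^ i * ξ ^ j)
    (ρ₀ : F → F)
    (hρ : ∀ a : F, (a ∈ H → ρ₀ a = -(ξ * a)) ∧ (a ∉ H → ρ₀ a = -(ε * a))) :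
    Set.BijOn ρ₀ {a : F | a ≠ 0} {a : F | a ≠ 0} ∧
    ∀ a : F, a ≠ 0 → ∀ b : F, b ≠ 0 → ∃ k : ℕ, ρ₀^[k] a = b := by
  classical
  have hm0 : 0 < m := by omega
  have hn0 : 0 < n := by omega
  have hmn_pos : 0 < m * n := Nat.mul_pos hm0 hn0
  have hmn_odd : Odd (m * n) := hmo.mul hno
  have hεm : ε ^ m = 1 := by rw [← hε]; exact pow_orderOf_eq_one ε
  have hξn : ξ ^ n = 1 := by rw [← hξ]; exact pow_orderOf_eq_one ξ
  have hε0 : ε ≠ 0 := by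
    intro h; rw [h, zero_pow hm0.ne'] at hεm; exact one_ne_zero hεm.symm
  have hξ0 : ξ ≠ 0 := by
    intro h; rw [h, zero_pow hn0.ne'] at hξn; exact one_ne_zero hξn.symm
  have hεmn : ε ^ (m * n) = 1 := by rw [pow_mul, hεm, one_pow]
  have hξmn : ξ ^ (m * n) = 1 := by rw [mul_comm, pow_mul, hξn, one_pow]
  -- every element of `H` is an `mn`-th root of unity
  have hHpow : ∀ x ∈ H, x ^ (m * n) = 1 := by
    intro x hx
    obtain ⟨i, hi, j, hj, rfl⟩ := (hH x).1 hx
    rw [mul_pow, pow_right_comm ε i, pow_right_comm ξ j, hεmn, hξmn, one_pow, one_pow, one_mul]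
  have hH_ne : ∀ x ∈ H, x ≠ 0 := by
    intro x hx h0
    have := hHpow x hx
    rw [h0, zero_pow hmn_pos.ne'] at this
    exact one_ne_zero this.symm
  -- char of F is odd, so -1 ≠ 1
  have hne : (-1 : F) ≠ 1 := by
    intro h
    have h2 : (2 : F) = 0 := by linear_combination -h
    have hcast : ((2 * m * n + 1 : ℕ) : F) = 0 := by
      rw [← hcard]; exact FiniteField.cast_card_eq_zero F
    push_cast at hcast
    have h1 : (1 : F) = 0 := by linear_combination hcast - ((m : F) * n) * h2
    exact one_ne_zero h1
  -- Fermat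
  have hfermat : ∀ x : F, x ≠ 0 → x ^ (2 * (m * n)) = 1 := by
    intro x hx
    have h1 := FiniteField.pow_card_sub_one_eq_one x hx
    rw [hcard, Nat.add_sub_cancel, mul_assoc] at h1
    exact h1
  -- counting: `H` is exactly the set of `mn`-th roots of unity
  have hinj : Set.InjOn (fun p : ℕ × ℕ => ε ^ p.1 * ξ ^ p.2)
      ((Finset.range m ×ˢ Finset.range n) : Finset (ℕ × ℕ)) := by
    rintro ⟨i, j⟩ hij ⟨i', j'⟩ hij' heq
    simp only [Finset.coe_product, Finset.coe_range, Set.mem_prod, Set.mem_Iio] at hij hij'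
    obtain ⟨hi, hj⟩ := hij
    obtain ⟨hi', hj'⟩ := hij'
    simp only at heq
    have hei : ε ^ (i * n) = ε ^ (i' * n) := by
      have h := congrArg (· ^ n) heq
      simp only [mul_pow] at h
      rw [pow_right_comm ξ j n, pow_right_comm ξ j' n, hξn] at h
      simp only [one_pow, mul_one, ← pow_mul] at h
      exact h
    have hej : ξ ^ (j * m) = ξ ^ (j' * m) := by
      have h := congrArg (· ^ m) heq
      simp only [mul_pow] at h
      rw [pow_right_comm ε i m, pow_right_comm ε i' m, hεm] at h
      simp only [one_pow, one_mul, ← pow_mul] at h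
      exact h
    have h1 : i = i' := aux_pow_inj hε0 hcop hε hi hi' hei
    have h2 : j = j' := aux_pow_inj hξ0 hcop.symm hξ hj hj' hej
    simp [h1, h2]
  have hmem_of_pow : ∀ x : F, x ^ (m * n) = 1 → x ∈ H := by
    intro x hx
    have hsub : (Finset.range m ×ˢ Finset.range n).image (fun p : ℕ × ℕ => ε ^ p.1 * ξ ^ p.2)
        ⊆ (Polynomial.nthRoots (m * n) (1 : F)).toFinset := by
      intro y hy
      simp only [Finset.mem_image, Finset.mem_product, Finset.mem_range] at hy
      obtain ⟨⟨i, j⟩, ⟨hi, hj⟩, rfl⟩ := hy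
      rw [Multiset.mem_toFinset, Polynomial.mem_nthRoots hmn_pos]
      exact hHpow _ ((hH _).2 ⟨i, hi, j, hj, rfl⟩)
    have hcard1 : ((Finset.range m ×ˢ Finset.range n).image
        (fun p : ℕ × ℕ => ε ^ p.1 * ξ ^ p.2)).card = m * n := by
      rw [Finset.card_image_of_injOn hinj, Finset.card_product, Finset.card_range,
        Finset.card_range]
    have hle : (Polynomial.nthRoots (m * n) (1 : F)).toFinset.card ≤
        ((Finset.range m ×ˢ Finset.range n).image
          (fun p : ℕ × ℕ => ε ^ p.1 * ξ ^ p.2)).card := by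
      rw [hcard1]
      exact le_trans (Multiset.toFinset_card_le _) (Polynomial.card_nthRoots _ _)
    have heq := Finset.eq_of_subset_of_card_le hsub hle
    have hxfin : x ∈ (Polynomial.nthRoots (m * n) (1 : F)).toFinset := by
      rw [Multiset.mem_toFinset, Polynomial.mem_nthRoots hmn_pos]; exact hx
    rw [← heq] at hxfin
    simp only [Finset.mem_image, Finset.mem_product, Finset.mem_range] at hxfin
    obtain ⟨⟨i, j⟩, ⟨hi, hj⟩, rfl⟩ := hxfin
    exact (hH _).2 ⟨i, hi, j, hj, rfl⟩
  -- nonmembers have character -1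
  have hnotH : ∀ x : F, x ≠ 0 → x ∉ H → x ^ (m * n) = -1 := by
    intro x hx hxH
    have h2 : x ^ (m * n) * x ^ (m * n) = 1 := by
      rw [← pow_add, ← two_mul]; exact hfermat x hx
    rcases mul_self_eq_one_iff.1 h2 with h | h
    · exact absurd (hmem_of_pow x h) hxH
    · exact h
  -- ρ₀ preserves nonzeroness
  have hρ_ne : ∀ a : F, a ≠ 0 → ρ₀ a ≠ 0 := by
    intro a ha
    by_cases haH : a ∈ H
    · rw [(hρ a).1 haH]; simp [hξ0, ha]
    · rw [(hρ a).2 haH]; simp [hε0, ha]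
  -- transitions between H and its complement
  have step1 : ∀ a ∈ H, ρ₀ a ∉ H := by
    intro a ha hmem
    have h1 := hHpow _ hmem
    rw [(hρ a).1 ha, neg_pow, mul_pow, hξmn, hHpow a ha, hmn_odd.neg_one_pow] at h1
    exact hne (by linear_combination h1)
  have step2 : ∀ a : F, a ≠ 0 → a ∉ H → ρ₀ a ∈ H := by
    intro a ha haH
    rw [(hρ a).2 haH]
    apply hmem_of_pow
    rw [neg_pow, mul_pow, hεmn, hnotH a ha haH, hmn_odd.neg_one_pow]
    ring
  -- ρ₀ squared is multiplication by ε*ξ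
  have hsq : ∀ a : F, a ≠ 0 → ρ₀ (ρ₀ a) = ε * ξ * a := by
    intro a ha
    by_cases haH : a ∈ H
    · have h1 := step1 a haH
      rw [(hρ a).1 haH] at h1 ⊢
      rw [(hρ _).2 h1]; ring
    · have h1 := step2 a ha haH
      rw [(hρ a).2 haH] at h1 ⊢
      rw [(hρ _).1 h1]; ring
  have hiter : ∀ k : ℕ, ∀ a : F, a ≠ 0 → ρ₀^[2 * k] a = (ε * ξ) ^ k * a := by
    intro k
    induction k with
    | zero => intro a _; simp
    | succ k ih =>
      intro a ha
      have h2 : 2 * (k + 1) = 2 * k + 2 := by ring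
      rw [h2, Function.iterate_add_apply]
      have he2 : ρ₀^[2] a = ε * ξ * a := hsq a ha
      rw [he2, ih _ (mul_ne_zero (mul_ne_zero hε0 hξ0) ha)]
      ring
  -- powers of g = ε*ξ: mod reduction
  have hpow_mod : ∀ (a : F) (d k : ℕ), a ^ d = 1 → a ^ k = a ^ (k % d) := by
    intro a d k h1
    conv_lhs => rw [← Nat.div_add_mod k d]
    rw [pow_add, pow_mul, h1, one_pow, one_mul]
  -- every element of H is a power of g
  have hmemg : ∀ x ∈ H, ∃ k : ℕ, x = (ε * ξ) ^ k := by
    intro x hx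
    obtain ⟨i, hi, j, hj, rfl⟩ := (hH x).1 hx
    set K := (Nat.chineseRemainder hcop i j : ℕ) with hK
    obtain ⟨h1, h2⟩ := (Nat.chineseRemainder hcop i j).2
    have e1 : K % m = i := Eq.trans (h1 : K % m = i % m) (Nat.mod_eq_of_lt hi)
    have e2 : K % n = j := Eq.trans (h2 : K % n = j % n) (Nat.mod_eq_of_lt hj)
    refine ⟨K, ?_⟩
    rw [mul_pow, hpow_mod ε m K hεm, hpow_mod ξ n K hξn, e1, e2]
  have horbit_same : ∀ a b : F, a ≠ 0 → b ≠ 0 → b / a ∈ H → ∃ k, ρ₀^[2 * k] a = b := by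
    intro a b ha hb hab
    obtain ⟨k, hk⟩ := hmemg _ hab
    exact ⟨k, by rw [hiter k a ha, ← hk, div_mul_cancel₀ b ha]⟩
  have hdiv : ∀ a b : F, a ≠ 0 → b ≠ 0 → (a ∈ H ↔ b ∈ H) → b / a ∈ H := by
    intro a b ha hb hiff
    apply hmem_of_pow
    rw [div_pow]
    by_cases haH : a ∈ H
    · rw [hHpow a haH, hHpow b (hiff.1 haH), div_one]
    · rw [hnotH a ha haH, hnotH b hb (fun hbH => haH (hiff.2 hbH))]
      norm_num
  -- the orbit statement
  have main : ∀ a : F, a ≠ 0 → ∀ b : F, b ≠ 0 → ∃ k : ℕ, ρ₀^[k] a = b := by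
    intro a ha b hb
    by_cases hiff : (a ∈ H ↔ b ∈ H)
    · obtain ⟨k, hk⟩ := horbit_same a b ha hb (hdiv a b ha hb hiff)
      exact ⟨2 * k, hk⟩
    · have hAne := hρ_ne a ha
      by_cases haH : a ∈ H
      · have hbH : b ∉ H := fun hbH => hiff (iff_of_true haH hbH)
        obtain ⟨k, hk⟩ := horbit_same (ρ₀ a) b hAne hb
          (hdiv _ _ hAne hb (iff_of_false (step1 a haH) hbH))
        refine ⟨2 * k + 1, ?_⟩
        rw [Function.iterate_add_apply, Function.iterate_one]
        exact hk
      · have hbH : b ∈ H := by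
          by_contra hbH; exact hiff (iff_of_false haH hbH)
        obtain ⟨k, hk⟩ := horbit_same (ρ₀ a) b hAne hb
          (hdiv _ _ hAne hb (iff_of_true (step2 a ha haH) hbH))
        refine ⟨2 * k + 1, ?_⟩
        rw [Function.iterate_add_apply, Function.iterate_one]
        exact hk
  -- injectivity
  have hinjOn : Set.InjOn ρ₀ {a : F | a ≠ 0} := by
    intro a ha b hb hab
    simp only [Set.mem_setOf_eq] at ha hb
    by_cases haH : a ∈ H <;> by_cases hbH : b ∈ H
    · rw [(hρ a).1 haH, (hρ b).1 hbH] at hab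
      exact mul_left_cancel₀ hξ0 (neg_injective hab)
    · exfalso
      have h1 : (ρ₀ a) ^ (m * n) = -1 := hnotH _ (hρ_ne a ha) (step1 a haH)
      have h2 : (ρ₀ b) ^ (m * n) = 1 := hHpow _ (step2 b hb hbH)
      rw [hab, h2] at h1
      exact hne h1.symm
    · exfalso
      have h1 : (ρ₀ b) ^ (m * n) = -1 := hnotH _ (hρ_ne b hb) (step1 b hbH)
      have h2 : (ρ₀ a) ^ (m * n) = 1 := hHpow _ (step2 a ha haH)
      rw [← hab, h2] at h1
      exact hne h1.symm
    · rw [(hρ a).2 haH, (hρ b).2 hbH] at hab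
      exact mul_left_cancel₀ hε0 (neg_injective hab)
  -- surjectivity
  have hiter_ne : ∀ k : ℕ, ∀ a : F, a ≠ 0 → ρ₀^[k] a ≠ 0 := by
    intro k
    induction k with
    | zero => intro a ha; simpa using ha
    | succ k ih =>
      intro a ha
      rw [Function.iterate_succ_apply]
      exact ih _ (hρ_ne a ha)
  have hgmn : (ε * ξ) ^ (m * n) = 1 := by rw [mul_pow, hεmn, hξmn, one_mul]
  have hfix : ∀ b : F, b ≠ 0 → ρ₀^[2 * (m * n)] b = b := by
    intro b hb
    rw [hiter _ _ hb, hgmn, one_mul]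
  have hsurj : Set.SurjOn ρ₀ {a : F | a ≠ 0} {a : F | a ≠ 0} := by
    intro b hb
    simp only [Set.mem_setOf_eq] at hb
    refine ⟨ρ₀^[2 * (m * n) - 1] b, hiter_ne _ b hb, ?_⟩
    have hsum : (1 : ℕ) + (2 * (m * n) - 1) = 2 * (m * n) := by omega
    calc ρ₀ (ρ₀^[2 * (m * n) - 1] b)
        = ρ₀^[1 + (2 * (m * n) - 1)] b := by
          rw [Function.iterate_add_apply, Function.iterate_one]
      _ = b := by rw [hsum]; exact hfix b hb
  exact ⟨⟨fun a ha => hρ_ne a ha, hinjOn, hsurj⟩, main⟩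
end

section
/- The group of orientation-preserving automorphisms of Π_{m,n} fixing 0 consists exactly of the multiplication maps x ↦ ηx for η ∈ H; in particular, this group is cyclic of order mn. -/
/-!
`H` is the group of `mn`-th roots of unity, i.e. of nonzero squares of `F`, and `-1 ∉ H`, so
`ρ₀` swaps `H` with the nonsquares and `ρ₀ ∘ ρ₀` is multiplication by `εξ`, a generator of `H`.
Orientation preservation at the dart `(x, x + z)` says that `z ↦ σ (x + z) - σ x` commutes with
`ρ₀`; such a map therefore commutes with multiplication by `εξ` and is `z ↦ c z` on `H`, where
`c` is its value at `1`. For `x = 0`, writing a nonsquare as `ρ₀ h` with `h ∈ H` shows that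
`σ = c ·` if `c ∈ H`. If `c ∉ H`, then `σ = (ε / ξ) c ·` on the nonsquares, and comparing the maps
seen from a vertex `x ∈ H` forces `ε² (x + 1) = ξ (ε x + ξ)`; taking `x = ε` and `x = ξ` gives
`ε = ξ`, which the coprime orders exclude.
-/

open Function

section Rotation

variable {F : Type*} [Field F] [DecidableEq F]

/-- `H` is encoded as the set of `N`-th roots of unity (the nonzero squares when `#F = 2N + 1`). -/
def archRot (N : ℕ) (ε ξ a : F) : F :=
  if a ^ N = 1 then -(ξ * a) else -(ε * a)

variable {N : ℕ} {ε ξ : F}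

@[simp]
lemma archRot_zero : archRot N ε ξ 0 = 0 := by
  unfold archRot; split_ifs <;> simp

lemma archRot_of_pow_eq_one {a : F} (ha : a ^ N = 1) : archRot N ε ξ a = -(ξ * a) :=
  if_pos ha

lemma archRot_of_pow_ne_one {a : F} (ha : a ^ N ≠ 1) : archRot N ε ξ a = -(ε * a) :=
  if_neg ha

lemma archRot_mul {η : F} (hη : η ^ N = 1) (a : F) :
    archRot N ε ξ (η * a) = η * archRot N ε ξ a := by
  by_cases ha : a ^ N = 1
  · rw [archRot_of_pow_eq_one (by rw [mul_pow, hη, ha, one_mul]), archRot_of_pow_eq_one ha]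
    ring
  · rw [archRot_of_pow_ne_one (by rwa [mul_pow, hη, one_mul]), archRot_of_pow_ne_one ha]
    ring

lemma archRot_mul_of_pow_ne_one (hξ : ξ ≠ 0) {c h : F} (hc : c ^ N ≠ 1) (hh : h ^ N = 1) :
    archRot N ε ξ (c * h) = ε / ξ * c * archRot N ε ξ h := by
  rw [archRot_of_pow_ne_one (by rwa [mul_pow, hh, mul_one]), archRot_of_pow_eq_one hh]
  field_simp

end Rotation

section FiniteField

variable {F : Type*} [Field F] [Fintype F] {N : ℕ}

lemma ringChar_ne_two_of_card_eq (hcard : Fintype.card F = 2 * N + 1) : ringChar F ≠ 2 := by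
  rw [Ne, FiniteField.even_card_iff_char_two, hcard]
  omega

lemma neg_one_ne_one_of_card_eq (hcard : Fintype.card F = 2 * N + 1) : (-1 : F) ≠ 1 :=
  Ring.neg_one_ne_one_of_char_ne_two (ringChar_ne_two_of_card_eq hcard)

lemma pow_eq_one_or_neg_one_of_card_eq (hcard : Fintype.card F = 2 * N + 1) {a : F}
    (ha : a ≠ 0) : a ^ N = 1 ∨ a ^ N = -1 := by
  have := FiniteField.pow_dichotomy (ringChar_ne_two_of_card_eq hcard) ha
  rwa [hcard, show (2 * N + 1) / 2 = N by omega] at this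

variable [DecidableEq F] {ε ξ : F}

lemma archRot_archRot (hN : Odd N) (hcard : Fintype.card F = 2 * N + 1) (hε : ε ^ N = 1)
    (hξ : ξ ^ N = 1) (a : F) : archRot N ε ξ (archRot N ε ξ a) = ε * ξ * a := by
  by_cases ha0 : a = 0
  · simp [ha0]
  rcases pow_eq_one_or_neg_one_of_card_eq hcard ha0 with ha | ha
  · rw [archRot_of_pow_eq_one ha, archRot_of_pow_ne_one]
    · ring
    · rw [hN.neg_pow, mul_pow, hξ, ha, one_mul]
      exact neg_one_ne_one_of_card_eq hcard
  · have ha1 : a ^ N ≠ 1 := by rw [ha]; exact neg_one_ne_one_of_card_eq hcard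
    rw [archRot_of_pow_ne_one ha1,
      archRot_of_pow_eq_one (by rw [hN.neg_pow, mul_pow, hε, ha]; ring)]
    ring

lemma exists_archRot_eq (hN : Odd N) (hcard : Fintype.card F = 2 * N + 1) (hξ : ξ ^ N = 1)
    {a : F} (ha0 : a ≠ 0) (ha : a ^ N ≠ 1) : ∃ h : F, h ^ N = 1 ∧ archRot N ε ξ h = a := by
  have ha' : a ^ N = -1 := (pow_eq_one_or_neg_one_of_card_eq hcard ha0).resolve_left ha
  have hξ0 : ξ ≠ 0 := (IsUnit.of_pow_eq_one hξ hN.pos.ne').ne_zero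
  have hh : (-(ξ⁻¹ * a)) ^ N = 1 := by rw [hN.neg_pow, mul_pow, inv_pow, hξ, ha']; simp
  refine ⟨-(ξ⁻¹ * a), hh, ?_⟩
  rw [archRot_of_pow_eq_one hh]
  field_simp

end FiniteField

def PreservesRotation {G : Type*} [AddGroup G] (ρ σ : G → G) : Prop :=
  ∀ x y, x ≠ y → σ (x + ρ (y - x)) = σ x + ρ (σ y - σ x)

namespace PreservesRotation

variable {G : Type*} [AddCommGroup G] {ρ σ : G → G}

lemma commute_sub (hσ : PreservesRotation ρ σ) (hρ : ρ 0 = 0) (x : G) :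
    Function.Commute (fun z => σ (x + z) - σ x) ρ := by
  intro z
  by_cases hz : z = 0
  · simp [hz, hρ]
  have h := hσ x (x + z) (by simpa using hz)
  rw [add_sub_cancel_left] at h
  simp only [h, add_sub_cancel_left]

lemma commute (hσ : PreservesRotation ρ σ) (hρ : ρ 0 = 0) (hσ0 : σ 0 = 0) :
    Function.Commute σ ρ := by
  intro z
  simpa [hσ0] using hσ.commute_sub hρ 0 z

end PreservesRotation

structure ArchdeaconParams {F : Type*} [Field F] [Fintype F] (N : ℕ) (ε ξ : F) : Prop where
  odd : Odd N
  card_eq : Fintype.card F = 2 * N + 1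
  pow_left_eq_one : ε ^ N = 1
  pow_right_eq_one : ξ ^ N = 1
  isPrimitiveRoot_mul : IsPrimitiveRoot (ε * ξ) N

namespace ArchdeaconParams

variable {F : Type*} [Field F] [Fintype F] {N : ℕ} {ε ξ : F}

lemma ne_zero_of_pow_eq_one (hA : ArchdeaconParams N ε ξ) {a : F} (ha : a ^ N = 1) : a ≠ 0 :=
  (IsUnit.of_pow_eq_one ha hA.odd.pos.ne').ne_zero

variable [DecidableEq F] {τ σ : F → F}

lemma apply_mul_of_commute (hA : ArchdeaconParams N ε ξ)
    (hτ : Function.Commute τ (archRot N ε ξ)) (z : F) : τ (ε * ξ * z) = ε * ξ * τ z := by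
  have hρρ := archRot_archRot hA.odd hA.card_eq hA.pow_left_eq_one hA.pow_right_eq_one
  rw [← hρρ, hτ.eq, hτ.eq, hρρ]

lemma apply_eq_mul_of_commute (hA : ArchdeaconParams N ε ξ)
    (hτ : Function.Commute τ (archRot N ε ξ)) {z : F} (hz : z ^ N = 1) :
    τ z = τ 1 * z := by
  have : NeZero N := ⟨hA.odd.pos.ne'⟩
  obtain ⟨k, -, rfl⟩ := hA.isPrimitiveRoot_mul.eq_pow_of_pow_eq_one hz
  clear hz
  induction k with
  | zero => simp
  | succ k ih =>
    rw [pow_succ', hA.apply_mul_of_commute hτ, ih]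
    ring

lemma apply_archRot_of_commute (hA : ArchdeaconParams N ε ξ)
    (hτ : Function.Commute τ (archRot N ε ξ)) {h : F} (hh : h ^ N = 1) :
    τ (archRot N ε ξ h) = archRot N ε ξ (τ 1 * h) := by
  rw [hτ.eq, hA.apply_eq_mul_of_commute hτ hh]

lemma eq_mul_of_commute (hA : ArchdeaconParams N ε ξ)
    (hτ : Function.Commute τ (archRot N ε ξ))
    (hτ0 : τ 0 = 0) (hτ1 : τ 1 ^ N = 1) (z : F) : τ z = τ 1 * z := by
  by_cases hz0 : z = 0
  · simp [hz0, hτ0]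
  by_cases hz : z ^ N = 1
  · exact hA.apply_eq_mul_of_commute hτ hz
  obtain ⟨h, hh, rfl⟩ := exists_archRot_eq (ε := ε) hA.odd hA.card_eq hA.pow_right_eq_one hz0 hz
  rw [hA.apply_archRot_of_commute hτ hh, archRot_mul hτ1]

lemma apply_archRot_of_commute_of_pow_ne_one (hA : ArchdeaconParams N ε ξ)
    (hτ : Function.Commute τ (archRot N ε ξ)) (hτ1 : τ 1 ^ N ≠ 1)
    {h : F} (hh : h ^ N = 1) : τ (archRot N ε ξ h) = ε / ξ * τ 1 * archRot N ε ξ h := by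
  rw [hA.apply_archRot_of_commute hτ hh,
    archRot_mul_of_pow_ne_one (hA.ne_zero_of_pow_eq_one hA.pow_right_eq_one) hτ1 hh]

lemma mul_sub_apply_add_one (hA : ArchdeaconParams N ε ξ)
    (hσ : PreservesRotation (archRot N ε ξ) σ) (hσ0 : σ 0 = 0) (hσ1 : σ 1 ^ N ≠ 1) {x : F}
    (hx : x ^ N = 1) : ε * (σ (x + 1) - σ x) = ξ * σ 1 := by
  -- Seen from the vertex `x`, the vertex `0` lies at `-x = ρ (ξ⁻¹ x)`.
  set τ : F → F := fun z => σ (x + z) - σ x with hτ_def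
  have hτ : Function.Commute τ (archRot N ε ξ) := hσ.commute_sub archRot_zero x
  have hξ0 := hA.ne_zero_of_pow_eq_one hA.pow_right_eq_one
  have hh : (ξ⁻¹ * x) ^ N = 1 := by
    rw [mul_pow, inv_pow, hA.pow_right_eq_one, hx, inv_one, one_mul]
  have hρh : archRot N ε ξ (ξ⁻¹ * x) = -x := by
    rw [archRot_of_pow_eq_one hh]
    field_simp
  have hρh0 : archRot N ε ξ (ξ⁻¹ * x) ≠ 0 := by
    rw [hρh]
    exact neg_ne_zero.mpr (hA.ne_zero_of_pow_eq_one hx)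
  have hτρh : τ (archRot N ε ξ (ξ⁻¹ * x)) = σ 1 * archRot N ε ξ (ξ⁻¹ * x) := by
    simp only [hτ_def, hρh, add_neg_cancel, hσ0,
      hA.apply_eq_mul_of_commute (hσ.commute archRot_zero hσ0) hx]
    ring
  by_cases hτ1 : τ 1 ^ N = 1
  · rw [hA.apply_archRot_of_commute hτ hh, archRot_mul hτ1] at hτρh
    rw [mul_right_cancel₀ hρh0 hτρh] at hτ1
    exact absurd hτ1 hσ1
  · rw [hA.apply_archRot_of_commute_of_pow_ne_one hτ hτ1 hh] at hτρh
    have := mul_right_cancel₀ hρh0 hτρh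
    field_simp at this
    exact this

lemma eq_or_sq_mul_add_one_eq (hA : ArchdeaconParams N ε ξ)
    (hσ : PreservesRotation (archRot N ε ξ) σ) (hσinj : Injective σ) (hσ0 : σ 0 = 0)
    (hσ1 : σ 1 ^ N ≠ 1) {x : F} (hx : x ^ N = 1) :
    ε = ξ ∨ ε ^ 2 * (x + 1) = ξ * (ε * x + ξ) := by
  have hc0 : σ 1 ≠ 0 := fun h => one_ne_zero (hσinj (h.trans hσ0.symm))
  have hξ0 := hA.ne_zero_of_pow_eq_one hA.pow_right_eq_one
  have hcomm := hσ.commute archRot_zero hσ0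
  have hstep := hA.mul_sub_apply_add_one hσ hσ0 hσ1 hx
  rw [hA.apply_eq_mul_of_commute hcomm hx] at hstep
  have hx1 : x + 1 ≠ 0 := by
    intro h
    rw [eq_neg_of_add_eq_zero_left h, hA.odd.neg_one_pow] at hx
    exact neg_one_ne_one_of_card_eq hA.card_eq hx
  by_cases hx1N : (x + 1) ^ N = 1
  · left
    rw [hA.apply_eq_mul_of_commute hcomm hx1N] at hstep
    exact mul_right_cancel₀ hc0 (by linear_combination hstep)
  · right
    obtain ⟨h, hh, hρh⟩ :=
      exists_archRot_eq (ε := ε) hA.odd hA.card_eq hA.pow_right_eq_one hx1 hx1N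
    rw [← hρh, hA.apply_archRot_of_commute_of_pow_ne_one hcomm hσ1 hh, hρh] at hstep
    field_simp at hstep
    linear_combination hstep

lemma eq_of_pow_apply_one_ne_one (hA : ArchdeaconParams N ε ξ)
    (hσ : PreservesRotation (archRot N ε ξ) σ) (hσinj : Injective σ) (hσ0 : σ 0 = 0)
    (hσ1 : σ 1 ^ N ≠ 1) : ε = ξ := by
  obtain h | hε := hA.eq_or_sq_mul_add_one_eq hσ hσinj hσ0 hσ1 hA.pow_left_eq_one
  · exact h
  obtain h | hξ := hA.eq_or_sq_mul_add_one_eq hσ hσinj hσ0 hσ1 hA.pow_right_eq_one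
  · exact h
  have : ε * (ε - ξ) ^ 2 = 0 := by linear_combination hε - hξ
  rcases mul_eq_zero.mp this with h | h
  · exact absurd h (hA.ne_zero_of_pow_eq_one hA.pow_left_eq_one)
  · exact sub_eq_zero.mp (pow_eq_zero_iff two_ne_zero |>.mp h)

theorem preservesRotation_archRot_iff (hA : ArchdeaconParams N ε ξ) (hεξ : ε ≠ ξ)
    (hσinj : Injective σ) (hσ0 : σ 0 = 0) :
    PreservesRotation (archRot N ε ξ) σ ↔ ∃ η, η ^ N = 1 ∧ ∀ x, σ x = η * x := by
  constructor
  · intro hσ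
    by_cases hσ1 : σ 1 ^ N = 1
    · exact ⟨σ 1, hσ1, hA.eq_mul_of_commute (hσ.commute archRot_zero hσ0) hσ0 hσ1⟩
    · exact absurd (hA.eq_of_pow_apply_one_ne_one hσ hσinj hσ0 hσ1) hεξ
  · rintro ⟨η, hη, hσ⟩ x y -
    simp only [hσ, ← mul_sub, archRot_mul hη, mul_add]

end ArchdeaconParams

lemma IsPrimitiveRoot.pow_eq_one_iff_exists_eq_pow {R : Type*} [CommRing R] [IsDomain R]
    {ζ : R} {k : ℕ} [NeZero k] (h : IsPrimitiveRoot ζ k) {x : R} :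
    x ^ k = 1 ↔ ∃ i : ℕ, x = ζ ^ i := by
  refine ⟨fun hx => ?_, ?_⟩
  · obtain ⟨i, -, hi⟩ := h.eq_pow_of_pow_eq_one hx
    exact ⟨i, hi.symm⟩
  · rintro ⟨i, rfl⟩
    rw [← pow_mul, mul_comm i, pow_mul, h.pow_eq_one, one_pow]

section OrderOf

variable {F : Type*} [Field F] {m n : ℕ} {ε ξ : F}

lemma isPrimitiveRoot_mul_of_coprime (hε : orderOf ε = m) (hξ : orderOf ξ = n)
    (hcop : m.Coprime n) : IsPrimitiveRoot (ε * ξ) (m * n) := by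
  rw [← hε, ← hξ, ← (Commute.all ε ξ).orderOf_mul_eq_mul_orderOf_of_coprime (hε ▸ hξ ▸ hcop)]
  exact IsPrimitiveRoot.orderOf _

lemma exists_pow_mul_pow_iff_pow_eq_one (hε : orderOf ε = m) (hξ : orderOf ξ = n)
    (hcop : m.Coprime n) (hm : 0 < m) (hn : 0 < n) {x : F} :
    (∃ i < m, ∃ j < n, x = ε ^ i * ξ ^ j) ↔ x ^ (m * n) = 1 := by
  constructor
  · rintro ⟨i, -, j, -, rfl⟩
    have hεm : ε ^ m = 1 := hε ▸ pow_orderOf_eq_one ε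
    have hξn : ξ ^ n = 1 := hξ ▸ pow_orderOf_eq_one ξ
    rw [mul_pow, ← pow_mul, ← pow_mul, show i * (m * n) = m * (i * n) by ring,
      show j * (m * n) = n * (j * m) by ring, pow_mul ε, pow_mul ξ, hεm, hξn, one_pow, one_pow,
      one_mul]
  · intro hx
    have : NeZero (m * n) := ⟨(Nat.mul_pos hm hn).ne'⟩
    obtain ⟨k, rfl⟩ := (isPrimitiveRoot_mul_of_coprime hε hξ hcop).pow_eq_one_iff_exists_eq_pow.1 hx
    refine ⟨k % m, Nat.mod_lt _ hm, k % n, Nat.mod_lt _ hn, ?_⟩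
    rw [← hε, ← hξ, pow_mod_orderOf, pow_mod_orderOf, mul_pow]

end OrderOf

theorem archdeacon_orientation_preserving_automorphisms_general
    (m n : ℕ) (hm : 3 ≤ m) (hmo : Odd m) (hno : Odd n)
    (hcop : Nat.Coprime m n)
    (F : Type*) [Field F] [Fintype F] (hcard : Fintype.card F = 2 * m * n + 1)
    (ε ξ : F) (hε : orderOf ε = m) (hξ : orderOf ξ = n)
    (H : Set F) (hH : ∀ x : F, x ∈ H ↔ ∃ i < m, ∃ j < n, x = ε ^ i * ξ ^ j)
    (ρ₀ : F → F)
    (hρ : ∀ a : F, (a ∈ H → ρ₀ a = -(ξ * a)) ∧ (a ∉ H → ρ₀ a = -(ε * a))) :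
    (∀ σ : F → F, Function.Bijective σ → σ 0 = 0 →
      ((∀ x y : F, x ≠ y → σ (x + ρ₀ (y - x)) = σ x + ρ₀ (σ y - σ x)) ↔
        ∃ η ∈ H, ∀ x : F, σ x = η * x)) ∧
    (∃ η₀ ∈ H, orderOf η₀ = m * n ∧ ∀ x : F, x ∈ H ↔ ∃ k : ℕ, x = η₀ ^ k) := by
  classical
  have he := isPrimitiveRoot_mul_of_coprime hε hξ hcop
  have hHpow (x : F) : x ∈ H ↔ x ^ (m * n) = 1 :=
    (hH x).trans (exists_pow_mul_pow_iff_pow_eq_one hε hξ hcop hmo.pos hno.pos)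
  have hA : ArchdeaconParams (m * n) ε ξ :=
    ⟨hmo.mul hno, by rw [hcard, mul_assoc], by rw [pow_mul, ← hε, pow_orderOf_eq_one, one_pow],
      by rw [mul_comm, pow_mul, ← hξ, pow_orderOf_eq_one, one_pow], he⟩
  have hεξ : ε ≠ ξ := by
    rintro rfl
    rw [← hε, ← hξ, Nat.coprime_self, hε] at hcop
    omega
  obtain rfl : ρ₀ = archRot (m * n) ε ξ := funext fun a => by
    by_cases ha : a ∈ H
    · rw [(hρ a).1 ha, archRot_of_pow_eq_one ((hHpow a).1 ha)]
    · rw [(hρ a).2 ha, archRot_of_pow_ne_one (mt (hHpow a).2 ha)]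
  have : NeZero (m * n) := ⟨hA.odd.pos.ne'⟩
  refine ⟨fun σ hσ hσ0 => ?_, ε * ξ, (hHpow _).2 he.pow_eq_one, he.eq_orderOf.symm,
    fun x => (hHpow x).trans he.pow_eq_one_iff_exists_eq_pow⟩
  simp only [hHpow]
  exact hA.preservesRotation_archRot_iff hεξ hσ.injective hσ0

/-- The group of orientation-preserving automorphisms of `Π_{m,n}` fixing `0`
consists exactly of the multiplication maps `x ↦ ηx` for `η ∈ H`; in particular, this group is
cyclic of order `mn` (the set `H` is generated by a single element of multiplicative order
`mn`). -/
theorem archdeacon_orientation_preserving_automorphisms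
    (m n : ℕ) (hm : 3 ≤ m) (hn : 3 ≤ n) (hmo : Odd m) (hno : Odd n)
    (hcop : Nat.Coprime m n)
    (F : Type*) [Field F] [Fintype F] (hcard : Fintype.card F = 2 * m * n + 1)
    (ε ξ : F) (hε : orderOf ε = m) (hξ : orderOf ξ = n)
    (H : Set F) (hH : ∀ x : F, x ∈ H ↔ ∃ i < m, ∃ j < n, x = ε ^ i * ξ ^ j)
    (ρ₀ : F → F)
    (hρ : ∀ a : F, (a ∈ H → ρ₀ a = -(ξ * a)) ∧ (a ∉ H → ρ₀ a = -(ε * a))) :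
    (∀ σ : F → F, Function.Bijective σ → σ 0 = 0 →
      ((∀ x y : F, x ≠ y → σ (x + ρ₀ (y - x)) = σ x + ρ₀ (σ y - σ x)) ↔
        ∃ η ∈ H, ∀ x : F, σ x = η * x)) ∧
    (∃ η₀ ∈ H, orderOf η₀ = m * n ∧ ∀ x : F, x ∈ H ↔ ∃ k : ℕ, x = η₀ ^ k) :=
  archdeacon_orientation_preserving_automorphisms_general m n hm hmo hno hcop F hcard ε ξ hε hξ H hH
    ρ₀ hρ
end

section
/- Let σ : G → G be a bijection with σ(0) = 0. (i) If σ is an orientation-preserving automorphism, i.e., σ(x + ρ₀(y−x)) = σ(x) + ρ₀(σ(y) − σ(x)) for every dart (x,y), then there exists an integer ℓ such that σ(a) = ρ₀^ℓ(a) for every nonzero a ∈ G. (ii) If σ is an orientation-reversing automorphism, i.e., σ(x + ρ₀(y−x)) = σ(x) + ρ₀^{−1}(σ(y) − σ(x)) for every dart (x,y), then for any fixed nonzero a ∈ G there exists an integer ℓ such that σ(ρ₀^{j}(a)) = ρ₀^{ℓ−j}(a) for every integer j. -/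
/-!
Putting `x = 0` in the defining identity shows that `σ` intertwines `ρ₀` with `ρ₀` (resp. with
`ρ₀⁻¹`), hence `σ ∘ ρ₀ ^ j = ρ₀ ^ (±j) ∘ σ` for every integer `j`. Since `ρ₀` is transitive on
the nonzero elements, `σ a = ρ₀ ^ ℓ a` for one nonzero `a` and some `ℓ`, and the intertwining
relation propagates this along the whole orbit `G \ {0}` of `a`.
-/

open Function

theorem semiconj_of_map_add_apply_sub {G : Type*} [AddCommGroup G] {σ ρ τ : G → G}
    (hρ : ρ 0 = 0) (hτ : τ 0 = 0) (hσ : σ 0 = 0)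
    (h : ∀ x y : G, x ≠ y → σ (x + ρ (y - x)) = σ x + τ (σ y - σ x)) :
    Semiconj σ ρ τ := by
  intro y
  rcases eq_or_ne y 0 with rfl | hy
  · rw [hρ, hσ, hτ]
  · simpa [hσ] using h 0 y hy.symm

theorem Function.Semiconj.perm_zpow {α : Type*} {f : α → α} {ρ τ : Equiv.Perm α}
    (h : Semiconj f ρ τ) : ∀ j : ℤ, Semiconj f ⇑(ρ ^ j) ⇑(τ ^ j)
  | (n : ℕ) => by simpa only [zpow_natCast, Equiv.Perm.coe_pow] using h.iterate_right n
  | .negSucc n => by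
    have hpow : Semiconj f ⇑(ρ ^ (n + 1)) ⇑(τ ^ (n + 1)) := by
      simpa only [Equiv.Perm.coe_pow] using h.iterate_right (n + 1)
    rw [zpow_negSucc, zpow_negSucc]
    exact hpow.inverses_right (ρ ^ (n + 1)).apply_symm_apply (τ ^ (n + 1)).symm_apply_apply

theorem apply_pow_apply_of_commute {α : Type*} {σ : α → α} {ρ : Equiv.Perm α} {a : α} {k : ℕ}
    (h : Function.Commute σ ρ) (hk : (ρ ^ k) a = σ a) (m : ℕ) :
    σ ((ρ ^ m) a) = (ρ ^ k) ((ρ ^ m) a) := by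
  rw [← Equiv.Perm.mul_apply, ← pow_mul_comm, Equiv.Perm.mul_apply, hk]
  simpa only [Equiv.Perm.coe_pow] using h.iterate_right m a

theorem apply_zpow_apply_of_semiconj_inv {α : Type*} {σ : α → α} {ρ : Equiv.Perm α} {a : α}
    {k : ℕ} (h : Semiconj σ ρ ⇑ρ⁻¹) (hk : (ρ ^ k) a = σ a) (j : ℤ) :
    σ ((ρ ^ j) a) = (ρ ^ ((k : ℤ) - j)) a := by
  rw [h.perm_zpow j a, ← hk, inv_zpow', sub_eq_neg_add, zpow_add, zpow_natCast,
    Equiv.Perm.mul_apply]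

theorem automorphisms_fixing_zero_act_dihedrally_general
    (G : Type*) [AddCommGroup G]
    (ρ₀ : Equiv.Perm G) (hρ0 : ρ₀ 0 = 0)
    (hcyc : ∀ a b : G, a ≠ 0 → b ≠ 0 → ∃ k : ℕ, (ρ₀ ^ k) a = b)
    (σ : G → G) (hσ : Function.Bijective σ) (hσ0 : σ 0 = 0) :
    ((∀ x y : G, x ≠ y → σ (x + ρ₀ (y - x)) = σ x + ρ₀ (σ y - σ x)) →
      ∃ ℓ : ℤ, ∀ a : G, a ≠ 0 → σ a = (ρ₀ ^ ℓ) a) ∧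
    ((∀ x y : G, x ≠ y → σ (x + ρ₀ (y - x)) = σ x + ρ₀⁻¹ (σ y - σ x)) →
      ∀ a : G, a ≠ 0 → ∃ ℓ : ℤ, ∀ j : ℤ, σ ((ρ₀ ^ j) a) = (ρ₀ ^ (ℓ - j)) a) := by
  have hσne : ∀ a : G, a ≠ 0 → σ a ≠ 0 := fun a ha => (hσ.injective.ne_iff' hσ0).mpr ha
  refine ⟨fun h => ?_, fun h a ha => ?_⟩
  · have hcomm : Function.Commute σ ρ₀ := semiconj_of_map_add_apply_sub hρ0 hρ0 hσ0 h
    by_cases hG : ∃ a₀ : G, a₀ ≠ 0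
    · obtain ⟨a₀, ha₀⟩ := hG
      obtain ⟨k, hk⟩ := hcyc a₀ (σ a₀) ha₀ (hσne a₀ ha₀)
      refine ⟨k, fun b hb => ?_⟩
      obtain ⟨m, rfl⟩ := hcyc a₀ b ha₀ hb
      simpa only [zpow_natCast] using apply_pow_apply_of_commute hcomm hk m
    · exact ⟨0, fun a ha => (hG ⟨a, ha⟩).elim⟩
  · have hρinv0 : ρ₀⁻¹ 0 = 0 := Equiv.Perm.inv_eq_iff_eq.mpr hρ0.symm
    obtain ⟨k, hk⟩ := hcyc a (σ a) ha (hσne a ha)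
    exact ⟨k, apply_zpow_apply_of_semiconj_inv
      (semiconj_of_map_add_apply_sub hρ0 hρinv0 hσ0 h) hk⟩

/-- Let `G` be a finite abelian group of order `v ≥ 3` and let `ρ₀` be a
permutation of `G` fixing `0` which acts as a single cycle of length `v−1` on `G \ {0}`.
Let `σ : G → G` be a bijection with `σ(0) = 0`.
(i) If `σ` is an orientation-preserving automorphism, then there exists an integer `ℓ` such that
`σ(a) = ρ₀^ℓ(a)` for every nonzero `a`.
(ii) If `σ` is an orientation-reversing automorphism, then for any fixed nonzero `a` there exists
an integer `ℓ` such that `σ(ρ₀^j(a)) = ρ₀^{ℓ−j}(a)` for every integer `j`. -/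
theorem automorphisms_fixing_zero_act_dihedrally
    (v : ℕ) (hv : 3 ≤ v)
    (G : Type*) [AddCommGroup G] [Fintype G] (hcard : Fintype.card G = v)
    (ρ₀ : Equiv.Perm G) (hρ0 : ρ₀ 0 = 0)
    (hcyc : ∀ a b : G, a ≠ 0 → b ≠ 0 → ∃ k : ℕ, (ρ₀ ^ k) a = b)
    (σ : G → G) (hσ : Function.Bijective σ) (hσ0 : σ 0 = 0) :
    ((∀ x y : G, x ≠ y → σ (x + ρ₀ (y - x)) = σ x + ρ₀ (σ y - σ x)) →
      ∃ ℓ : ℤ, ∀ a : G, a ≠ 0 → σ a = (ρ₀ ^ ℓ) a) ∧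
    ((∀ x y : G, x ≠ y → σ (x + ρ₀ (y - x)) = σ x + ρ₀⁻¹ (σ y - σ x)) →
      ∀ a : G, a ≠ 0 → ∃ ℓ : ℤ, ∀ j : ℤ, σ ((ρ₀ ^ j) a) = (ρ₀ ^ (ℓ - j)) a) :=
  automorphisms_fixing_zero_act_dihedrally_general G ρ₀ hρ0 hcyc σ hσ hσ0
end

section
/- Suppose m ≠ n, m, n ≥ 3, and that for all distinct x, y ∈ G the faces of the darts (x,y) and (y,x) are simple cycles, one of length m and the other of length n. If σ : G → G is a bijection with σ(0) = 0 which is an orientation-reversing automorphism, i.e., σ(x + ρ₀(y−x)) = σ(x) + ρ₀^{−1}(σ(y) − σ(x)) for every dart (x,y), then σ fixes no nonzero element of G: σ(x) = x implies x = 0. -/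
/-- The face-tracing map: it sends the dart `(x, y)` to `(y, y + ρ₀(x − y))`. -/
def faceMap {G : Type*} [AddCommGroup G] (ρ₀ : G → G) : G × G → G × G :=
  fun p => (p.2, p.2 + ρ₀ (p.1 - p.2))

/-- The face of the dart `p` (its orbit under the face-tracing map) is a simple cycle of
length `k`: it consists of exactly `k` darts whose first components are pairwise distinct. -/
def IsSimpleCycleFace {G : Type*} [AddCommGroup G] (ρ₀ : G → G) (k : ℕ) (p : G × G) : Prop :=
  (faceMap ρ₀)^[k] p = p ∧
    ∀ i < k, ∀ j < k, ((faceMap ρ₀)^[i] p).1 = ((faceMap ρ₀)^[j] p).1 → i = j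

/-!
An orientation-reversing `σ` induces the map `(x, y) ↦ (σ y, σ x)` on darts, which conjugates the
face-tracing map `φ` to `φ⁻¹`. It therefore carries the face of a dart onto a face of the same
length, traversed backwards. If `σ x = x ≠ 0`, then, as `σ 0 = 0`, it swaps the darts `(0, x)`
and `(x, 0)`, so their faces have the same length, whereas one has length `m` and the other `n`.
-/

open Function

section

variable {G : Type*} [AddCommGroup G]

def reverseDart (σ : G → G) (p : G × G) : G × G := (σ p.2, σ p.1)

lemma IsSimpleCycleFace.minimalPeriod_eq {ρ₀ : G → G} {k : ℕ} {p : G × G}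
    (h : IsSimpleCycleFace ρ₀ k p) (hk : 0 < k) : minimalPeriod (faceMap ρ₀) p = k := by
  have hper : IsPeriodicPt (faceMap ρ₀) k p := h.1
  have hpos := hper.minimalPeriod_pos hk
  refine (hper.minimalPeriod_le hk).antisymm (not_lt.mp fun hlt => ?_)
  have h0 := h.2 _ hlt 0 hk (congrArg Prod.fst (isPeriodicPt_minimalPeriod _ p))
  omega

variable {ρ₀ : Equiv.Perm G}

lemma mapsTo_faceMap_darts (hρ0 : ρ₀ 0 = 0) :
    Set.MapsTo (faceMap ρ₀) {p : G × G | p.1 ≠ p.2} {p | p.1 ≠ p.2} := by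
  intro p hp h
  apply hp
  rw [← sub_eq_zero, ← ρ₀.injective.eq_iff, hρ0]
  exact left_eq_add.mp h

variable {σ : G → G}
  (hOR : ∀ x y : G, x ≠ y → σ (x + ρ₀ (y - x)) = σ x + ρ₀⁻¹ (σ y - σ x))
include hOR

lemma faceMap_reverseDart_faceMap {p : G × G} (hp : p.1 ≠ p.2) :
    faceMap ρ₀ (reverseDart σ (faceMap ρ₀ p)) = reverseDart σ p := by
  simp only [faceMap, reverseDart, hOR p.2 p.1 hp.symm, add_sub_cancel_left,
    Equiv.Perm.coe_inv, Equiv.apply_symm_apply, add_sub_cancel]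

lemma iterate_faceMap_reverseDart_iterate_faceMap (hρ0 : ρ₀ 0 = 0) (k : ℕ) {p : G × G}
    (hp : p.1 ≠ p.2) :
    (faceMap ρ₀)^[k] (reverseDart σ ((faceMap ρ₀)^[k] p)) = reverseDart σ p := by
  induction k with
  | zero => rfl
  | succ k ih =>
    rw [iterate_succ_apply, iterate_succ_apply',
      faceMap_reverseDart_faceMap hOR ((mapsTo_faceMap_darts hρ0).iterate k hp), ih]

lemma IsPeriodicPt.reverseDart_faceMap (hρ0 : ρ₀ 0 = 0) {k : ℕ} {p : G × G}
    (hp : p.1 ≠ p.2) (hk : IsPeriodicPt (faceMap ρ₀) k p) :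
    IsPeriodicPt (faceMap ρ₀) k (reverseDart σ p) := by
  have h := iterate_faceMap_reverseDart_iterate_faceMap hOR hρ0 k hp
  rwa [hk.eq] at h

lemma length_dvd_of_isSimpleCycleFace_reverseDart (hρ0 : ρ₀ 0 = 0) {a b : ℕ} {p : G × G}
    (hp : p.1 ≠ p.2) (ha : IsSimpleCycleFace ρ₀ a p)
    (hb : IsSimpleCycleFace ρ₀ b (reverseDart σ p)) (hb0 : 0 < b) : b ∣ a :=
  hb.minimalPeriod_eq hb0 ▸ (IsPeriodicPt.reverseDart_faceMap hOR hρ0 hp ha.1).minimalPeriod_dvd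

end

theorem orientation_reversing_fixes_only_zero_general
    (m n : ℕ) (hm : 3 ≤ m) (hn : 3 ≤ n) (hmn : m ≠ n)
    (G : Type*) [AddCommGroup G]
    (ρ₀ : Equiv.Perm G) (hρ0 : ρ₀ 0 = 0)
    (hfaces : ∀ x y : G, x ≠ y →
      (IsSimpleCycleFace ⇑ρ₀ m (x, y) ∧ IsSimpleCycleFace ⇑ρ₀ n (y, x)) ∨
      (IsSimpleCycleFace ⇑ρ₀ n (x, y) ∧ IsSimpleCycleFace ⇑ρ₀ m (y, x)))
    (σ : G → G) (hσ0 : σ 0 = 0)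
    (hOR : ∀ x y : G, x ≠ y → σ (x + ρ₀ (y - x)) = σ x + ρ₀⁻¹ (σ y - σ x)) :
    ∀ x : G, σ x = x → x = 0 := by
  intro x hx
  by_contra hx0
  have hrev₁ : reverseDart σ (0, x) = (x, 0) := by simp [reverseDart, hx, hσ0]
  have hrev₂ : reverseDart σ (x, 0) = (0, x) := by simp [reverseDart, hx, hσ0]
  have hlen : ∀ a b, 0 < a → 0 < b → IsSimpleCycleFace ρ₀ a (0, x) →
      IsSimpleCycleFace ρ₀ b (x, 0) → a = b := fun a b ha0 hb0 ha hb =>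
    Nat.dvd_antisymm
      (length_dvd_of_isSimpleCycleFace_reverseDart hOR hρ0 hx0 hb (hrev₂ ▸ ha) ha0)
      (length_dvd_of_isSimpleCycleFace_reverseDart hOR hρ0 (Ne.symm hx0) ha (hrev₁ ▸ hb) hb0)
  rcases hfaces 0 x (Ne.symm hx0) with ⟨hm0x, hnx0⟩ | ⟨hn0x, hmx0⟩
  · exact hmn (hlen m n (by omega) (by omega) hm0x hnx0)
  · exact hmn (hlen n m (by omega) (by omega) hn0x hmx0).symm

/-- Suppose `m ≠ n`, `m, n ≥ 3`, `G` is a finite abelian group of order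
`2mn+1`, `ρ₀` is a permutation of `G` fixing `0` acting as a single cycle of length `2mn` on
`G \ {0}`, and for all distinct `x, y ∈ G` the faces of the darts `(x,y)` and `(y,x)` are simple
cycles, one of length `m` and the other of length `n`.  If `σ : G → G` is a bijection with
`σ(0) = 0` which is an orientation-reversing automorphism, then `σ` fixes no nonzero element. -/
theorem orientation_reversing_fixes_only_zero
    (m n : ℕ) (hm : 3 ≤ m) (hn : 3 ≤ n) (hmn : m ≠ n)
    (G : Type*) [AddCommGroup G] [Fintype G] (hcard : Fintype.card G = 2 * m * n + 1)
    (ρ₀ : Equiv.Perm G) (hρ0 : ρ₀ 0 = 0)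
    (hcyc : ∀ a b : G, a ≠ 0 → b ≠ 0 → ∃ k : ℕ, (ρ₀ ^ k) a = b)
    (hfaces : ∀ x y : G, x ≠ y →
      (IsSimpleCycleFace ⇑ρ₀ m (x, y) ∧ IsSimpleCycleFace ⇑ρ₀ n (y, x)) ∨
      (IsSimpleCycleFace ⇑ρ₀ n (x, y) ∧ IsSimpleCycleFace ⇑ρ₀ m (y, x)))
    (σ : G → G) (hσ : Function.Bijective σ) (hσ0 : σ 0 = 0)
    (hOR : ∀ x y : G, x ≠ y → σ (x + ρ₀ (y - x)) = σ x + ρ₀⁻¹ (σ y - σ x)) :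
    ∀ x : G, σ x = x → x = 0 :=
  orientation_reversing_fixes_only_zero_general m n hm hn hmn G ρ₀ hρ0 hfaces σ hσ0 hOR
end

section
/- Every face of the Archdeacon embedding Π_{m,n} is a simple cycle of length m or n. Precisely: for every dart (x,y), if y − x ∈ H then the orbit of (x,y) under the face-tracing map φ consists of exactly m darts whose first components are pairwise distinct, and if y − x ∉ H then the orbit of (x,y) under φ consists of exactly n darts whose first components are pairwise distinct. -/
/-- If along the orbit the rotation acts as multiplication by a fixed root of unity `ζ` of
order `k ≥ 2`, the face is a simple cycle of length `k`. -/
lemma cycle_of_step {F : Type*} [Field F] (ρ₀ : F → F) (ζ d x : F) (k : ℕ)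
    (hζ : orderOf ζ = k) (hk2 : 2 ≤ k) (hd : d ≠ 0)
    (hstep : ∀ j : ℕ, ρ₀ (-(d * ζ ^ j)) = ζ * (d * ζ ^ j)) :
    IsSimpleCycleFace ρ₀ k (x, x + d) := by
  have hζ1 : ζ ≠ 1 := by
    intro h
    rw [h, orderOf_one] at hζ
    omega
  set T : ℕ → F := fun j => ∑ i ∈ Finset.range j, ζ ^ i with hT
  have hTsucc : ∀ j, T (j + 1) = T j + ζ ^ j := fun j => Finset.sum_range_succ _ _
  have hiter : ∀ j : ℕ, (faceMap ρ₀)^[j] (x, x + d) = (x + d * T j, x + d * T (j + 1)) := by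
    intro j
    induction j with
    | zero => simp [hT]
    | succ j ih =>
        rw [Function.iterate_succ_apply', ih]
        have h1 : (x + d * T j) - (x + d * T (j + 1)) = -(d * ζ ^ j) := by
          rw [hTsucc]; ring
        simp only [faceMap, h1, hstep j]
        refine Prod.ext rfl ?_
        simp only
        rw [hTsucc (j + 1)]
        ring
  have hgm : ∀ i, T i * (ζ - 1) = ζ ^ i - 1 := fun i => geom_sum_mul ζ i
  have hζk : ζ ^ k = 1 := by rw [← hζ]; exact pow_orderOf_eq_one ζ
  have hTinj : ∀ i < k, ∀ j < k, T i = T j → i = j := by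
    intro i hi j hj hij
    have hpow : ζ ^ i = ζ ^ j := by
      have h1 := hgm i
      have h2 := hgm j
      rw [hij] at h1
      exact sub_left_inj.mp (h1.symm.trans h2)
    -- wlog i ≤ j
    have key : ∀ a b : ℕ, a ≤ b → b < k → ζ ^ a = ζ ^ b → a = b := by
      intro a b hab hbk hp
      have hζ0 : ζ ≠ 0 := by
        intro h
        rw [h, zero_pow (by omega : k ≠ 0)] at hζk
        exact one_ne_zero hζk.symm
      have hone : ζ ^ (b - a) = 1 := by
        have h3 : ζ ^ a * ζ ^ (b - a) = ζ ^ a * 1 := by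
          rw [mul_one, ← pow_add, Nat.add_sub_cancel' hab, hp]
        exact mul_left_cancel₀ (pow_ne_zero a hζ0) h3
      have hdvd : k ∣ b - a := by
        rw [← hζ]; exact orderOf_dvd_of_pow_eq_one hone
      have h0 : b - a = 0 := Nat.eq_zero_of_dvd_of_lt hdvd (by omega)
      omega
    rcases le_total i j with h | h
    · exact key i j h hj hpow
    · exact (key j i h hi hpow.symm).symm
  constructor
  · rw [hiter k]
    have hTk : T k = 0 := by
      have := hgm k
      rw [hζk, sub_self] at this
      rcases mul_eq_zero.mp this with h | h
      · exact h
      · exact absurd (sub_eq_zero.mp h) hζ1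
    have hTk1 : T (k + 1) = 1 := by rw [hTsucc, hTk, hζk, zero_add]
    rw [hTk, hTk1]; simp
  · intro i hi j hj hfst
    rw [hiter i, hiter j] at hfst
    simp only at hfst
    have : T i = T j := by
      have := add_left_cancel hfst
      exact mul_left_cancel₀ hd this
    exact hTinj i hi j hj this

/-- Every face of the Archdeacon embedding `Π_{m,n}` is a simple cycle of
length `m` or `n`: for every dart `(x,y)`, if `y − x ∈ H` then the orbit of `(x,y)` under the
face-tracing map consists of exactly `m` darts with pairwise distinct first components, and if
`y − x ∉ H` then it consists of exactly `n` darts with pairwise distinct first components. -/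
theorem archdeacon_faces_are_simple_cycles
    (m n : ℕ) (hm : 3 ≤ m) (hn : 3 ≤ n) (hmo : Odd m) (hno : Odd n)
    (hcop : Nat.Coprime m n)
    (F : Type*) [Field F] [Fintype F] (hcard : Fintype.card F = 2 * m * n + 1)
    (ε ξ : F) (hε : orderOf ε = m) (hξ : orderOf ξ = n)
    (H : Set F) (hH : ∀ x : F, x ∈ H ↔ ∃ i < m, ∃ j < n, x = ε ^ i * ξ ^ j)
    (ρ₀ : F → F)
    (hρ : ∀ a : F, (a ∈ H → ρ₀ a = -(ξ * a)) ∧ (a ∉ H → ρ₀ a = -(ε * a))) :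
    ∀ x y : F, x ≠ y →
      (y - x ∈ H → IsSimpleCycleFace ρ₀ m (x, y)) ∧
      (y - x ∉ H → IsSimpleCycleFace ρ₀ n (x, y)) := by
  have hmn0 : m * n ≠ 0 := by positivity
  have hεm : ε ^ m = 1 := by rw [← hε]; exact pow_orderOf_eq_one ε
  have hξn : ξ ^ n = 1 := by rw [← hξ]; exact pow_orderOf_eq_one ξ
  have hεmn : ε ^ (m * n) = 1 := by rw [pow_mul, hεm, one_pow]
  have hξmn : ξ ^ (m * n) = 1 := by rw [mul_comm, pow_mul, hξn, one_pow]
  -- characterization of H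
  have hHchar : ∀ a : F, a ∈ H ↔ a ^ (m * n) = 1 := by
    intro a
    constructor
    · intro ha
      obtain ⟨i, hi, j, hj, rfl⟩ := (hH a).mp ha
      have h1 : (ε ^ i) ^ (m * n) = 1 := by
        rw [← pow_mul, mul_comm i (m * n), pow_mul, hεmn, one_pow]
      have h2 : (ξ ^ j) ^ (m * n) = 1 := by
        rw [← pow_mul, mul_comm j (m * n), pow_mul, hξmn, one_pow]
      rw [mul_pow, h1, h2, one_mul]
    · intro ha
      have hprim : IsPrimitiveRoot (ε * ξ) (m * n) := by
        have : orderOf (ε * ξ) = m * n := by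
          rw [(Commute.all ε ξ).orderOf_mul_eq_mul_orderOf_of_coprime (by rw [hε, hξ]; exact hcop),
            hε, hξ]
        exact this ▸ IsPrimitiveRoot.orderOf (ε * ξ)
      haveI : NeZero (m * n) := ⟨hmn0⟩
      obtain ⟨i, hi, hia⟩ := hprim.eq_pow_of_pow_eq_one ha
      rw [hH]
      refine ⟨i % m, Nat.mod_lt _ (by omega), i % n, Nat.mod_lt _ (by omega), ?_⟩
      rw [← hia, mul_pow]
      congr 1
      · rw [show i % m = i % orderOf ε by rw [hε], pow_mod_orderOf]
      · rw [show i % n = i % orderOf ξ by rw [hξ], pow_mod_orderOf]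
  -- -1 ≠ 1 in F
  have hchar : ringChar F ≠ 2 := by
    intro h
    have h2 := FiniteField.even_card_iff_char_two.mp h
    rw [hcard, mul_assoc] at h2
    omega
  have hneg1 : (-1 : F) ≠ 1 := Ring.neg_one_ne_one_of_char_ne_two hchar
  -- dichotomy
  have hdich : ∀ a : F, a ≠ 0 → a ^ (m * n) = 1 ∨ a ^ (m * n) = -1 := by
    intro a ha
    have h2 : a ^ (2 * m * n) = 1 := by
      have := FiniteField.pow_card_sub_one_eq_one a ha
      rwa [hcard, Nat.add_sub_cancel] at this
    have : a ^ (m * n) * a ^ (m * n) = 1 := by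
      rw [← pow_add]
      rw [show m * n + m * n = 2 * m * n by ring]
      exact h2
    rcases mul_self_eq_one_iff.mp this with h | h
    · exact Or.inl h
    · exact Or.inr h
  have hoddmn : Odd (m * n) := hmo.mul hno
  have hnegpow : ∀ a : F, (-a) ^ (m * n) = -(a ^ (m * n)) := fun a => hoddmn.neg_pow a
  intro x y hxy
  set d : F := y - x with hd
  have hd0 : d ≠ 0 := sub_ne_zero.mpr (Ne.symm hxy)
  have hxyd : (x, y) = (x, x + d) := by rw [hd]; ring_nf
  constructor
  · -- d ∈ H : length m cycle with ζ = ε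
    intro hdH
    have hdpow : d ^ (m * n) = 1 := (hHchar d).mp hdH
    rw [hxyd]
    refine cycle_of_step ρ₀ ε d x m hε (by omega) hd0 ?_
    intro j
    have hc : (d * ε ^ j) ^ (m * n) = 1 := by
      have h1 : (ε ^ j) ^ (m * n) = 1 := by
        rw [← pow_mul, mul_comm j (m * n), pow_mul, hεmn, one_pow]
      rw [mul_pow, h1, hdpow, mul_one]
    have hnc : -(d * ε ^ j) ∉ H := by
      rw [hHchar, hnegpow, hc]
      intro h
      exact hneg1 h
    rw [(hρ _).2 hnc]
    ring
  · -- d ∉ H : length n cycle with ζ = ξ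
    intro hdH
    have hdpow : d ^ (m * n) = -1 := by
      rcases hdich d hd0 with h | h
      · exact absurd ((hHchar d).mpr h) hdH
      · exact h
    rw [hxyd]
    refine cycle_of_step ρ₀ ξ d x n hξ (by omega) hd0 ?_
    intro j
    have hc : (-(d * ξ ^ j)) ^ (m * n) = 1 := by
      have h1 : (ξ ^ j) ^ (m * n) = 1 := by
        rw [← pow_mul, mul_comm j (m * n), pow_mul, hξmn, one_pow]
      rw [hnegpow, mul_pow, h1, hdpow, mul_one, neg_neg]
    have hnc : -(d * ξ ^ j) ∈ H := (hHchar _).mpr hc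
    rw [(hρ _).1 hnc]
    ring
end

section
/- The group of all automorphisms of the Archdeacon embedding Π_{m,n} fixing 0 consists exactly of the multiplication maps x ↦ ηx for η ∈ H; in particular it contains no orientation-reversing automorphism and is cyclic of order mn. -/
/-!
Write `N = mn`. Since `|F| = 2N + 1`, `H` is the group of `N`-th roots of unity (the nonzero
squares), it is generated by `εξ`, and `-1 ∉ H`. The rotation satisfies `ρ₀ ∘ ρ₀ = (εξ · )` and
commutes with multiplication by every `η ∈ H`. An automorphism `σ` fixing `0` satisfies
`σ ∘ ρ₀ = ρ₀^{±1} ∘ σ`, so on `H` it is `h ↦ σ(1) h` (preserving) or `h ↦ σ(1) h⁻¹`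
(reversing), and since `-H = ρ₀(H)` this determines `σ` everywhere up to the class of `σ(1)`.
In the preserving case with `σ(1) ∈ H`, `σ` is multiplication by `σ(1)`. In every other case the
automorphism condition at the darts `(1, 0)` and `(-1, 0)` (reversing) or `(a², a² + 1)` with
`a² + 1 = b²` (preserving) forces `ε^k = ξ^k` for some `k ∈ {1, 2, 3}`, which is impossible since
the orders of `ε` and `ξ` are coprime with product `mn ≥ 9`.
-/

theorem orderOf_mul_orderOf_dvd_of_pow_eq_pow {G : Type*} [Monoid G] {a b : G}
    (hab : (orderOf a).Coprime (orderOf b)) {k : ℕ} (h : a ^ k = b ^ k) :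
    orderOf a * orderOf b ∣ k := by
  have hk : orderOf (a ^ k) = 1 :=
    Nat.eq_one_of_dvd_coprimes hab (orderOf_pow_dvd k) (h ▸ orderOf_pow_dvd k)
  have ha : a ^ k = 1 := orderOf_eq_one_iff.mp hk
  exact hab.mul_dvd_of_dvd_of_dvd (orderOf_dvd_of_pow_eq_one ha)
    (orderOf_dvd_of_pow_eq_one (h ▸ ha))

theorem isPrimitiveRoot_mul_of_coprime_s12 {M : Type*} [CommMonoid M] {a b : M}
    (hab : (orderOf a).Coprime (orderOf b)) :
    IsPrimitiveRoot (a * b) (orderOf a * orderOf b) :=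
  (Commute.all a b).orderOf_mul_eq_mul_orderOf_of_coprime hab ▸ IsPrimitiveRoot.orderOf _

theorem exists_pow_mul_pow_iff_pow_eq_one_s12 {R : Type*} [CommRing R] [IsDomain R] {a b : R}
    (hab : (orderOf a).Coprime (orderOf b)) (ha : 0 < orderOf a) (hb : 0 < orderOf b) (x : R) :
    (∃ i < orderOf a, ∃ j < orderOf b, x = a ^ i * b ^ j) ↔ x ^ (orderOf a * orderOf b) = 1 := by
  constructor
  · rintro ⟨i, -, j, -, rfl⟩
    rw [mul_pow, ← pow_mul, ← pow_mul,
      show i * (orderOf a * orderOf b) = orderOf a * (i * orderOf b) by ring,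
      show j * (orderOf a * orderOf b) = orderOf b * (j * orderOf a) by ring]
    simp [pow_mul]
  · intro hx
    have : NeZero (orderOf a * orderOf b) := ⟨(Nat.mul_pos ha hb).ne'⟩
    obtain ⟨k, -, rfl⟩ := (isPrimitiveRoot_mul_of_coprime_s12 hab).eq_pow_of_pow_eq_one hx
    exact ⟨k % orderOf a, Nat.mod_lt k ha, k % orderOf b, Nat.mod_lt k hb,
      by rw [pow_mod_orderOf, pow_mod_orderOf, mul_pow]⟩

theorem apply_pow_eq_pow_mul {M : Type*} [Monoid M] {σ : M → M} {g g' : M}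
    (h : ∀ v, σ (g * v) = g' * σ v) (k : ℕ) : σ (g ^ k) = g' ^ k * σ 1 := by
  induction k with
  | zero => simp
  | succ k ih => rw [pow_succ', h, ih, pow_succ', mul_assoc]

namespace FiniteField

variable {F : Type*} [Field F] [Fintype F]

open Finset in
theorem exists_ne_zero_pow_four_ne_one (h : 5 < Fintype.card F) : ∃ t : F, t ≠ 0 ∧ t ^ 4 ≠ 1 := by
  classical
  have hroots : #(Polynomial.nthRootsFinset 4 (1 : F)) ≤ 4 := by
    rw [Polynomial.nthRootsFinset_def]
    exact (Multiset.toFinset_card_le _).trans (Polynomial.card_nthRoots 4 1)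
  have hlt : #(insert 0 (Polynomial.nthRootsFinset 4 (1 : F))) < #(univ : Finset F) := by
    rw [card_univ]
    exact (card_insert_le _ _).trans_lt (by omega)
  obtain ⟨t, -, ht⟩ := exists_mem_notMem_of_card_lt_card hlt
  rw [mem_insert, Polynomial.mem_nthRootsFinset (by norm_num), not_or] at ht
  exact ⟨t, ht⟩

theorem exists_sq_add_one_eq_sq (hF : ringChar F ≠ 2) (h : 5 < Fintype.card F) :
    ∃ a b : F, a ≠ 0 ∧ b ≠ 0 ∧ a ^ 2 + 1 = b ^ 2 := by
  obtain ⟨t, ht0, ht4⟩ := exists_ne_zero_pow_four_ne_one h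
  have h2 : (2 : F) ≠ 0 := Ring.two_ne_zero hF
  refine ⟨(t - t⁻¹) / 2, (t + t⁻¹) / 2, div_ne_zero ?_ h2, div_ne_zero ?_ h2, ?_⟩
  · intro h
    apply ht4
    have : t ^ 2 = 1 := by field_simp at h; linear_combination h
    rw [show t ^ 4 = (t ^ 2) ^ 2 by ring, this, one_pow]
  · intro h
    apply ht4
    have : t ^ 2 = -1 := by field_simp at h; linear_combination h
    rw [show t ^ 4 = (t ^ 2) ^ 2 by ring, this]
    norm_num
  · field_simp
    ring

variable {N : ℕ}

theorem ringChar_ne_two_of_card_eq (hcard : Fintype.card F = 2 * N + 1) : ringChar F ≠ 2 :=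
  fun h => by
    have := even_card_of_char_two h
    omega

theorem pow_eq_one_or_neg_one_of_card_eq (hcard : Fintype.card F = 2 * N + 1) {x : F}
    (hx : x ≠ 0) : x ^ N = 1 ∨ x ^ N = -1 := by
  have hN : Fintype.card F / 2 = N := by omega
  exact hN ▸ pow_dichotomy (ringChar_ne_two_of_card_eq hcard) hx

theorem exists_pow_eq_one_and_add_one_pow_eq_one (hcard : Fintype.card F = 2 * N + 1)
    (hN : 2 < N) : ∃ x : F, x ^ N = 1 ∧ (x + 1) ^ N = 1 := by
  have hF := ringChar_ne_two_of_card_eq hcard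
  have hsq {a : F} (ha : a ≠ 0) : (a ^ 2) ^ N = 1 := by
    have hN : Fintype.card F / 2 = N := by omega
    exact hN ▸ (isSquare_iff hF (pow_ne_zero 2 ha)).mp (IsSquare.sq a)
  obtain ⟨a, b, ha, hb, hab⟩ := exists_sq_add_one_eq_sq hF (by omega)
  exact ⟨a ^ 2, hsq ha, hab ▸ hsq hb⟩

end FiniteField

/-- With `ρ' = ρ` (resp. `ρ' = ρ⁻¹`) and `σ` bijective, these are the orientation-preserving
(resp. orientation-reversing) automorphisms of the embedding with rotation `ρ` at `0`. -/
def IsRotationMorphism {F : Type*} [AddGroup F] (ρ ρ' σ : F → F) : Prop :=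
  ∀ x y : F, x ≠ y → σ (x + ρ (y - x)) = σ x + ρ' (σ y - σ x)

namespace IsRotationMorphism

variable {F : Type*} [AddGroup F] {ρ ρ' σ : F → F}

theorem semiconj (hσ : IsRotationMorphism ρ ρ' σ) (h0 : σ 0 = 0) (hρ : ρ 0 = 0)
    (hρ' : ρ' 0 = 0) : Function.Semiconj σ ρ ρ' := by
  intro v
  rcases eq_or_ne v 0 with rfl | hv
  · rw [hρ, h0, hρ']
  · simpa [h0] using hσ 0 v hv.symm

theorem apply_add_apply_neg (hσ : IsRotationMorphism ρ ρ' σ) (h0 : σ 0 = 0) {x : F}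
    (hx : x ≠ 0) : σ (x + ρ (-x)) = σ x + ρ' (-σ x) := by
  simpa [h0] using hσ x 0 hx

end IsRotationMorphism

/-- The rotation at `0` of `Π_{m,n}` with `N = mn`: the subgroup `H` is encoded as the group of
`N`-th roots of unity, and every nonzero element off `H` satisfies `x ^ N = -1`. -/
structure IsArchdeaconRotation {F : Type*} [Field F] (N : ℕ) (ε ξ : F) (ρ : F → F) : Prop where
  odd : Odd N
  neg_one_ne_one : (-1 : F) ≠ 1
  pow_eq_one_or_neg_one : ∀ x : F, x ≠ 0 → x ^ N = 1 ∨ x ^ N = -1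
  exists_eq_pow : ∀ x : F, x ^ N = 1 → ∃ k : ℕ, x = (ε * ξ) ^ k
  left_pow : ε ^ N = 1
  right_pow : ξ ^ N = 1
  apply_of_pow_eq_one : ∀ {a : F}, a ^ N = 1 → ρ a = -(ξ * a)
  apply_of_pow_ne_one : ∀ {a : F}, a ^ N ≠ 1 → ρ a = -(ε * a)

namespace IsArchdeaconRotation

variable {F : Type*} [Field F] {N : ℕ} {ε ξ : F}

theorem of_card [Fintype F] (hcop : (orderOf ε).Coprime (orderOf ξ))
    (hodd : Odd (orderOf ε * orderOf ξ))
    (hcard : Fintype.card F = 2 * (orderOf ε * orderOf ξ) + 1) {ρ : F → F}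
    (h₁ : ∀ {a : F}, a ^ (orderOf ε * orderOf ξ) = 1 → ρ a = -(ξ * a))
    (h₂ : ∀ {a : F}, a ^ (orderOf ε * orderOf ξ) ≠ 1 → ρ a = -(ε * a)) :
    IsArchdeaconRotation (orderOf ε * orderOf ξ) ε ξ ρ where
  odd := hodd
  neg_one_ne_one :=
    Ring.neg_one_ne_one_of_char_ne_two (FiniteField.ringChar_ne_two_of_card_eq hcard)
  pow_eq_one_or_neg_one _ := FiniteField.pow_eq_one_or_neg_one_of_card_eq hcard
  exists_eq_pow x hx := by
    have : NeZero (orderOf ε * orderOf ξ) := ⟨hodd.pos.ne'⟩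
    obtain ⟨k, -, hk⟩ := (isPrimitiveRoot_mul_of_coprime_s12 hcop).eq_pow_of_pow_eq_one hx
    exact ⟨k, hk.symm⟩
  left_pow := by rw [pow_mul, pow_orderOf_eq_one, one_pow]
  right_pow := by rw [mul_comm, pow_mul, pow_orderOf_eq_one, one_pow]
  apply_of_pow_eq_one := h₁
  apply_of_pow_ne_one := h₂

section Rotation

variable {ρ : F → F}

theorem pow_ne_one_of_pow_eq_neg_one (R : IsArchdeaconRotation N ε ξ ρ) {x : F}
    (hx : x ^ N = -1) : x ^ N ≠ 1 :=
  hx ▸ R.neg_one_ne_one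

theorem ne_zero_of_pow_eq_one (R : IsArchdeaconRotation N ε ξ ρ) {x : F} (hx : x ^ N = 1) :
    x ≠ 0 := by
  rintro rfl
  rw [zero_pow R.odd.pos.ne'] at hx
  exact zero_ne_one hx

theorem ne_zero_of_pow_eq_neg_one (R : IsArchdeaconRotation N ε ξ ρ) {x : F}
    (hx : x ^ N = -1) : x ≠ 0 := by
  rintro rfl
  rw [zero_pow R.odd.pos.ne', zero_eq_neg] at hx
  exact one_ne_zero hx

theorem one_add_ne_zero (R : IsArchdeaconRotation N ε ξ ρ) {x : F} (hx : x ^ N = 1) :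
    1 + x ≠ 0 := by
  intro h
  rw [eq_neg_of_add_eq_zero_right h, R.odd.neg_one_pow] at hx
  exact R.neg_one_ne_one hx

theorem neg_one_add_neg_ne_zero (R : IsArchdeaconRotation N ε ξ ρ) {x : F} (hx : x ^ N = 1) :
    -1 + -x ≠ 0 := by
  rw [← neg_add]
  exact neg_ne_zero.mpr (R.one_add_ne_zero hx)

theorem apply_of_pow_eq_neg_one (R : IsArchdeaconRotation N ε ξ ρ) {a : F} (ha : a ^ N = -1) :
    ρ a = -(ε * a) :=
  R.apply_of_pow_ne_one (R.pow_ne_one_of_pow_eq_neg_one ha)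

theorem apply_zero (R : IsArchdeaconRotation N ε ξ ρ) : ρ 0 = 0 := by
  rw [R.apply_of_pow_ne_one (a := 0) (by rw [zero_pow R.odd.pos.ne']; exact zero_ne_one), mul_zero,
    neg_zero]

theorem apply_one (R : IsArchdeaconRotation N ε ξ ρ) : ρ 1 = -ξ := by
  rw [R.apply_of_pow_eq_one (one_pow N), mul_one]

theorem apply_neg_one (R : IsArchdeaconRotation N ε ξ ρ) : ρ (-1) = ε := by
  rw [R.apply_of_pow_eq_neg_one (R.odd.neg_one_pow), mul_neg_one, neg_neg]

theorem apply_mul (R : IsArchdeaconRotation N ε ξ ρ) {η : F} (hη : η ^ N = 1) (a : F) :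
    ρ (η * a) = η * ρ a := by
  have h : (η * a) ^ N = a ^ N := by rw [mul_pow, hη, one_mul]
  by_cases ha : a ^ N = 1
  · rw [R.apply_of_pow_eq_one ha, R.apply_of_pow_eq_one (h ▸ ha)]
    ring
  · rw [R.apply_of_pow_ne_one ha, R.apply_of_pow_ne_one (h ▸ ha)]
    ring

theorem apply_apply (R : IsArchdeaconRotation N ε ξ ρ) (x : F) : ρ (ρ x) = ε * ξ * x := by
  rcases eq_or_ne x 0 with rfl | hx
  · rw [R.apply_zero, R.apply_zero, mul_zero]
  rcases R.pow_eq_one_or_neg_one x hx with h | h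
  · have h' : (-(ξ * x)) ^ N = -1 := by rw [R.odd.neg_pow, mul_pow, R.right_pow, h, one_mul]
    rw [R.apply_of_pow_eq_one h, R.apply_of_pow_eq_neg_one h']
    ring
  · have h' : (-(ε * x)) ^ N = 1 := by
      rw [R.odd.neg_pow, mul_pow, R.left_pow, h, one_mul, neg_neg]
    rw [R.apply_of_pow_eq_neg_one h, R.apply_of_pow_eq_one h']
    ring

theorem neg_inv_mul_pow_eq_one (R : IsArchdeaconRotation N ε ξ ρ) {v : F} (hv : v ^ N = -1) :
    (-(ξ⁻¹ * v)) ^ N = 1 := by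
  rw [R.odd.neg_pow, mul_pow, inv_pow, R.right_pow, inv_one, one_mul, hv, neg_neg]

theorem apply_neg_inv_mul (R : IsArchdeaconRotation N ε ξ ρ) {v : F} (hv : v ^ N = -1) :
    ρ (-(ξ⁻¹ * v)) = v := by
  rw [R.apply_of_pow_eq_one (R.neg_inv_mul_pow_eq_one hv), mul_neg, neg_neg, mul_inv_cancel_left₀]
  exact R.ne_zero_of_pow_eq_one R.right_pow

theorem isRotationMorphism_mul (R : IsArchdeaconRotation N ε ξ ρ) {η : F} (hη : η ^ N = 1) :
    IsRotationMorphism ρ ρ (η * ·) := by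
  intro x y _
  simp only [← mul_sub, R.apply_mul hη, mul_add]

theorem preserving_apply_of_pow_eq_one (R : IsArchdeaconRotation N ε ξ ρ) {σ : F → F}
    (hσ : IsRotationMorphism ρ ρ σ) (h0 : σ 0 = 0) {h : F} (hh : h ^ N = 1) : σ h = σ 1 * h := by
  have hρσ := hσ.semiconj h0 R.apply_zero R.apply_zero
  have hstep : ∀ v, σ (ε * ξ * v) = ε * ξ * σ v := fun v => by
    rw [← R.apply_apply, hρσ, hρσ, R.apply_apply]
  obtain ⟨k, rfl⟩ := R.exists_eq_pow h hh
  rw [apply_pow_eq_pow_mul hstep, mul_comm]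

theorem preserving_apply_of_pow_eq_neg_one (R : IsArchdeaconRotation N ε ξ ρ) {σ : F → F}
    (hσ : IsRotationMorphism ρ ρ σ) (h0 : σ 0 = 0) {v : F} (hv : v ^ N = -1) :
    σ v = ρ (σ 1 * -(ξ⁻¹ * v)) := by
  conv_lhs => rw [← R.apply_neg_inv_mul hv]
  rw [hσ.semiconj h0 R.apply_zero R.apply_zero,
    R.preserving_apply_of_pow_eq_one hσ h0 (R.neg_inv_mul_pow_eq_one hv)]

theorem preserving_eq_mul (R : IsArchdeaconRotation N ε ξ ρ) {σ : F → F}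
    (hσ : IsRotationMorphism ρ ρ σ) (h0 : σ 0 = 0) (hc : σ 1 ^ N = 1) (x : F) :
    σ x = σ 1 * x := by
  rcases eq_or_ne x 0 with rfl | hx
  · rw [h0, mul_zero]
  rcases R.pow_eq_one_or_neg_one x hx with h | h
  · exact R.preserving_apply_of_pow_eq_one hσ h0 h
  · rw [R.preserving_apply_of_pow_eq_neg_one hσ h0 h, R.apply_mul hc, R.apply_neg_inv_mul h]

theorem preserving_pow_ne_neg_one (R : IsArchdeaconRotation N ε ξ ρ) {σ : F → F}
    (hσ : IsRotationMorphism ρ ρ σ) (h0 : σ 0 = 0) (hεξ : ε ≠ ξ) {x : F} (hx : x ^ N = 1)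
    (hx1 : (x + 1) ^ N = 1) : σ 1 ^ N ≠ -1 := by
  intro hc
  have hc0 := R.ne_zero_of_pow_eq_neg_one hc
  have hξ0 := R.ne_zero_of_pow_eq_one R.right_pow
  have hoff : ∀ v, v ^ N = -1 → ξ * σ v = ε * σ 1 * v := fun v hv => by
    have hw : (σ 1 * -(ξ⁻¹ * v)) ^ N = -1 := by
      rw [mul_pow, hc, R.neg_inv_mul_pow_eq_one hv, mul_one]
    rw [R.preserving_apply_of_pow_eq_neg_one hσ h0 hv, R.apply_of_pow_eq_neg_one hw]
    field_simp
  have hdart := hσ x (x + 1) (by simp)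
  rw [add_sub_cancel_left, R.apply_one, R.preserving_apply_of_pow_eq_one hσ h0 hx,
    R.preserving_apply_of_pow_eq_one hσ h0 hx1, ← mul_sub, add_sub_cancel_left, mul_one,
    R.apply_of_pow_eq_neg_one hc] at hdart
  apply hεξ
  rcases eq_or_ne (x + -ξ) 0 with hz | hz
  · rw [hz, h0] at hdart
    exact mul_left_cancel₀ hc0 (by linear_combination hdart + σ 1 * hz)
  rcases R.pow_eq_one_or_neg_one _ hz with hz1 | hz1
  · rw [R.preserving_apply_of_pow_eq_one hσ h0 hz1] at hdart
    exact mul_left_cancel₀ hc0 (by linear_combination hdart)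
  · have h := hoff _ hz1
    rw [hdart] at h
    exact mul_left_cancel₀ (mul_ne_zero hc0 (R.ne_zero_of_pow_eq_one hx))
      (by linear_combination -h)

end Rotation

section Perm

variable {ρ : Equiv.Perm F}

theorem inv_apply_zero (R : IsArchdeaconRotation N ε ξ ρ) : ρ⁻¹ 0 = 0 :=
  Equiv.Perm.inv_eq_iff_eq.mpr R.apply_zero.symm

theorem inv_apply_of_pow_eq_one (R : IsArchdeaconRotation N ε ξ ρ) {u : F} (hu : u ^ N = 1) :
    ρ⁻¹ u = -(ε⁻¹ * u) := by
  have hw : (-(ε⁻¹ * u)) ^ N = -1 := by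
    rw [R.odd.neg_pow, mul_pow, inv_pow, R.left_pow, inv_one, one_mul, hu]
  rw [Equiv.Perm.inv_eq_iff_eq, R.apply_of_pow_eq_neg_one hw, mul_neg, neg_neg,
    mul_inv_cancel_left₀ (R.ne_zero_of_pow_eq_one R.left_pow)]

theorem inv_apply_of_pow_eq_neg_one (R : IsArchdeaconRotation N ε ξ ρ) {u : F}
    (hu : u ^ N = -1) : ρ⁻¹ u = -(ξ⁻¹ * u) :=
  Equiv.Perm.inv_eq_iff_eq.mpr (R.apply_neg_inv_mul hu).symm

theorem inv_apply_inv_apply (R : IsArchdeaconRotation N ε ξ ρ) (u : F) :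
    ρ⁻¹ (ρ⁻¹ u) = (ε * ξ)⁻¹ * u := by
  have hεξ : ε * ξ ≠ 0 :=
    mul_ne_zero (R.ne_zero_of_pow_eq_one R.left_pow) (R.ne_zero_of_pow_eq_one R.right_pow)
  rw [Equiv.Perm.inv_eq_iff_eq, Equiv.Perm.inv_eq_iff_eq, R.apply_apply, mul_inv_cancel_left₀ hεξ]

theorem reversing_mul_apply_of_pow_eq_one (R : IsArchdeaconRotation N ε ξ ρ) {σ : F → F}
    (hσ : IsRotationMorphism ρ ⇑ρ⁻¹ σ) (h0 : σ 0 = 0) {h : F} (hh : h ^ N = 1) :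
    h * σ h = σ 1 := by
  have hρσ := hσ.semiconj h0 R.apply_zero R.inv_apply_zero
  have hstep : ∀ v, σ (ε * ξ * v) = (ε * ξ)⁻¹ * σ v := fun v => by
    rw [← R.apply_apply, hρσ, hρσ, R.inv_apply_inv_apply]
  obtain ⟨k, rfl⟩ := R.exists_eq_pow h hh
  rw [apply_pow_eq_pow_mul hstep, inv_pow, mul_inv_cancel_left₀ (R.ne_zero_of_pow_eq_one hh)]

theorem reversing_apply_of_pow_eq_neg_one (R : IsArchdeaconRotation N ε ξ ρ) {σ : F → F}
    (hσ : IsRotationMorphism ρ ⇑ρ⁻¹ σ) (h0 : σ 0 = 0) {v : F} (hv : v ^ N = -1) :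
    σ v = ρ⁻¹ (σ (-(ξ⁻¹ * v))) := by
  conv_lhs => rw [← R.apply_neg_inv_mul hv]
  exact hσ.semiconj h0 R.apply_zero R.inv_apply_zero _

theorem reversing_relations_of_pow_eq_one (R : IsArchdeaconRotation N ε ξ ρ) {σ : F → F}
    (hσ : IsRotationMorphism ρ ⇑ρ⁻¹ σ) (h0 : σ 0 = 0) (hc : σ 1 ^ N = 1) :
    ((1 + ε) * (1 + ξ) = ξ ∨ ε * ((1 + ε) * (1 + ξ)) = ξ ^ 2) ∧
      ((1 + ε) * (1 + ξ) = ε ∨ ξ * ((1 + ε) * (1 + ξ)) = ε ^ 2) := by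
  have hc0 := R.ne_zero_of_pow_eq_one hc
  have hε0 := R.ne_zero_of_pow_eq_one R.left_pow
  have hξ0 := R.ne_zero_of_pow_eq_one R.right_pow
  have hon : ∀ h, h ^ N = 1 → h * σ h = σ 1 := fun h hh =>
    R.reversing_mul_apply_of_pow_eq_one hσ h0 hh
  have hoff : ∀ v, v ^ N = -1 → ε * v * σ v = ξ * σ 1 := by
    intro v hv
    have hw := R.neg_inv_mul_pow_eq_one hv
    have hσw : σ (-(ξ⁻¹ * v)) ^ N = 1 :=
      calc σ (-(ξ⁻¹ * v)) ^ N = (-(ξ⁻¹ * v) * σ (-(ξ⁻¹ * v))) ^ N := by rw [mul_pow, hw, one_mul]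
        _ = 1 := by rw [hon _ hw, hc]
    rw [R.reversing_apply_of_pow_eq_neg_one hσ h0 hv, R.inv_apply_of_pow_eq_one hσw]
    have := hon _ hw
    field_simp at this ⊢
    linear_combination this
  constructor
  · have e := hσ.apply_add_apply_neg h0 one_ne_zero
    rw [R.apply_neg_one, R.inv_apply_of_pow_eq_neg_one (by rw [R.odd.neg_pow, hc])] at e
    rcases R.pow_eq_one_or_neg_one _ (R.one_add_ne_zero R.left_pow) with hs | hs
    · have h := hon _ hs
      rw [e] at h
      field_simp at h
      exact .inl (by linear_combination h)
    · have h := hoff _ hs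
      rw [e] at h
      field_simp at h
      exact .inr (by linear_combination h)
  · have e := hσ.apply_add_apply_neg h0 (neg_ne_zero.mpr one_ne_zero)
    have h1 : ε * -σ (-1) = ξ * σ 1 := by linear_combination hoff (-1) R.odd.neg_one_pow
    have h1' : (-σ (-1)) ^ N = 1 :=
      calc (-σ (-1)) ^ N = (ε * -σ (-1)) ^ N := by rw [mul_pow, R.left_pow, one_mul]
        _ = 1 := by rw [h1, mul_pow, R.right_pow, hc, one_mul]
    rw [neg_neg, R.apply_one, R.inv_apply_of_pow_eq_one h1'] at e
    rcases R.pow_eq_one_or_neg_one _ (R.neg_one_add_neg_ne_zero R.right_pow) with ht1 | ht1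
    · have h := hon _ ht1
      rw [e] at h
      field_simp at h
      exact .inr (mul_left_cancel₀ hc0 (by linear_combination ε * h + (-1 - ξ) * (ε + 1) * h1))
    · have h := hoff _ ht1
      rw [e] at h
      field_simp at h
      exact .inl (mul_left_cancel₀ (mul_ne_zero hξ0 hc0)
        (by linear_combination ε * h + (-1 - ξ) * (ε + 1) * h1))

theorem reversing_cube_eq_one_of_pow_eq_neg_one (R : IsArchdeaconRotation N ε ξ ρ) {σ : F → F}
    (hσ : IsRotationMorphism ρ ⇑ρ⁻¹ σ) (h0 : σ 0 = 0) (hc : σ 1 ^ N = -1) :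
    ε ^ 3 = 1 ∧ ξ ^ 3 = 1 := by
  have hc0 := R.ne_zero_of_pow_eq_neg_one hc
  have hε0 := R.ne_zero_of_pow_eq_one R.left_pow
  have hξ0 := R.ne_zero_of_pow_eq_one R.right_pow
  have hmul : ∀ v, v ≠ 0 → v * σ v = σ 1 := by
    intro v hv
    rcases R.pow_eq_one_or_neg_one v hv with h | h
    · exact R.reversing_mul_apply_of_pow_eq_one hσ h0 h
    have hw := R.neg_inv_mul_pow_eq_one h
    have hon := R.reversing_mul_apply_of_pow_eq_one hσ h0 hw
    have hσw : σ (-(ξ⁻¹ * v)) ^ N = -1 :=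
      calc σ (-(ξ⁻¹ * v)) ^ N = (-(ξ⁻¹ * v) * σ (-(ξ⁻¹ * v))) ^ N := by rw [mul_pow, hw, one_mul]
        _ = -1 := by rw [hon, hc]
    rw [R.reversing_apply_of_pow_eq_neg_one hσ h0 h, R.inv_apply_of_pow_eq_neg_one hσw]
    field_simp at hon ⊢
    linear_combination hon
  constructor
  · have e := hσ.apply_add_apply_neg h0 one_ne_zero
    rw [R.apply_neg_one, R.inv_apply_of_pow_eq_one (by rw [R.odd.neg_pow, hc, neg_neg])] at e
    have h := hmul _ (R.one_add_ne_zero R.left_pow)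
    rw [e] at h
    field_simp at h
    linear_combination (ε - 1) * h
  · have e := hσ.apply_add_apply_neg h0 (neg_ne_zero.mpr one_ne_zero)
    have h1 : σ (-1) = -σ 1 := by linear_combination -hmul (-1) (neg_ne_zero.mpr one_ne_zero)
    rw [neg_neg, R.apply_one, h1, neg_neg, R.inv_apply_of_pow_eq_neg_one hc] at e
    have h := hmul _ (R.neg_one_add_neg_ne_zero R.right_pow)
    rw [e] at h
    field_simp at h
    linear_combination (ξ - 1) * h

theorem not_isRotationMorphism_inv (R : IsArchdeaconRotation N ε ξ ρ) {σ : F → F}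
    (h0 : σ 0 = 0) (hσ1 : σ 1 ≠ 0) (h2 : ε ^ 2 ≠ ξ ^ 2) (h3 : ε ^ 3 ≠ ξ ^ 3) :
    ¬IsRotationMorphism ρ ⇑ρ⁻¹ σ := by
  intro hσ
  rcases R.pow_eq_one_or_neg_one _ hσ1 with hc | hc
  · obtain ⟨h₁ | h₁, h₂ | h₂⟩ := R.reversing_relations_of_pow_eq_one hσ h0 hc
    · exact h2 (by linear_combination (ε + ξ) * (h₁ - h₂))
    · exact h2 (by linear_combination ξ * h₁ - h₂)
    · exact h2 (by linear_combination h₁ - ε * h₂)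
    · exact h3 (by linear_combination ξ * h₁ - ε * h₂)
  · obtain ⟨hε, hξ⟩ := R.reversing_cube_eq_one_of_pow_eq_neg_one hσ h0 hc
    exact h3 (hε.trans hξ.symm)

end Perm

end IsArchdeaconRotation

/-- The group of all automorphisms of the Archdeacon embedding `Π_{m,n}`
fixing `0` consists exactly of the multiplication maps `x ↦ ηx` for `η ∈ H`; in particular it
contains no orientation-reversing automorphism and is cyclic of order `mn` (the set `H` is
generated by a single element of multiplicative order `mn`). -/
theorem archdeacon_full_stabilizer_of_zero
    (m n : ℕ) (hm : 3 ≤ m) (hn : 3 ≤ n) (hmo : Odd m) (hno : Odd n)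
    (hcop : Nat.Coprime m n)
    (F : Type*) [Field F] [Fintype F] (hcard : Fintype.card F = 2 * m * n + 1)
    (ε ξ : F) (hε : orderOf ε = m) (hξ : orderOf ξ = n)
    (H : Set F) (hH : ∀ x : F, x ∈ H ↔ ∃ i < m, ∃ j < n, x = ε ^ i * ξ ^ j)
    (ρ₀ : Equiv.Perm F)
    (hρ : ∀ a : F, (a ∈ H → ρ₀ a = -(ξ * a)) ∧ (a ∉ H → ρ₀ a = -(ε * a))) :
    (∀ σ : F → F, Function.Bijective σ → σ 0 = 0 →
      (((∀ x y : F, x ≠ y → σ (x + ρ₀ (y - x)) = σ x + ρ₀ (σ y - σ x)) ∨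
        (∀ x y : F, x ≠ y → σ (x + ρ₀ (y - x)) = σ x + ρ₀⁻¹ (σ y - σ x))) ↔
        ∃ η ∈ H, ∀ x : F, σ x = η * x)) ∧
    (∀ σ : F → F, Function.Bijective σ → σ 0 = 0 →
      ¬ (∀ x y : F, x ≠ y → σ (x + ρ₀ (y - x)) = σ x + ρ₀⁻¹ (σ y - σ x))) ∧
    (∃ η₀ ∈ H, orderOf η₀ = m * n ∧ ∀ x : F, x ∈ H ↔ ∃ k : ℕ, x = η₀ ^ k) := by
  subst hε hξ
  have hmem (x : F) : x ∈ H ↔ x ^ (orderOf ε * orderOf ξ) = 1 :=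
    (hH x).trans (exists_pow_mul_pow_iff_pow_eq_one_s12 hcop (by omega) (by omega) x)
  have hcard' : Fintype.card F = 2 * (orderOf ε * orderOf ξ) + 1 := by rw [hcard, Nat.mul_assoc]
  have R : IsArchdeaconRotation (orderOf ε * orderOf ξ) ε ξ ρ₀ :=
    .of_card hcop (hmo.mul hno) hcard' (fun ha => (hρ _).1 ((hmem _).2 ha))
      (fun ha => (hρ _).2 (mt (hmem _).1 ha))
  have hpow (k : ℕ) (hk : 0 < k) (hk9 : k < 9) : ε ^ k ≠ ξ ^ k := fun h => by
    have := Nat.le_of_dvd hk (orderOf_mul_orderOf_dvd_of_pow_eq_pow hcop h)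
    nlinarith
  have hσ1 {σ : F → F} (hσ : σ.Bijective) (h0 : σ 0 = 0) : σ 1 ≠ 0 :=
    fun h => one_ne_zero (hσ.injective (h.trans h0.symm))
  have hnorev {σ : F → F} (hσ : σ.Bijective) (h0 : σ 0 = 0) : ¬IsRotationMorphism ρ₀ ⇑ρ₀⁻¹ σ :=
    R.not_isRotationMorphism_inv h0 (hσ1 hσ h0) (hpow 2 (by omega) (by omega))
      (hpow 3 (by omega) (by omega))
  obtain ⟨x, hx, hx1⟩ := FiniteField.exists_pow_eq_one_and_add_one_pow_eq_one hcard' (by nlinarith)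
  have hroot := isPrimitiveRoot_mul_of_coprime_s12 hcop
  refine ⟨fun σ hσ h0 => ⟨?_, ?_⟩, fun σ hσ h0 => hnorev hσ h0, ε * ξ, (hmem _).2 hroot.pow_eq_one,
    hroot.eq_orderOf.symm, fun x => (hmem x).trans ⟨R.exists_eq_pow x, ?_⟩⟩
  · rintro (hpres | hrev)
    · have hεξ : ε ≠ ξ := fun h => hpow 1 one_pos (by omega) (by rw [h])
      have hc := (R.pow_eq_one_or_neg_one _ (hσ1 hσ h0)).resolve_right
        (R.preserving_pow_ne_neg_one hpres h0 hεξ hx hx1)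
      exact ⟨σ 1, (hmem _).2 hc, R.preserving_eq_mul hpres h0 hc⟩
    · exact absurd hrev (hnorev hσ h0)
  · rintro ⟨η, hη, hση⟩
    exact .inl (funext hση ▸ R.isRotationMorphism_mul ((hmem η).1 hη))
  · rintro ⟨k, rfl⟩
    rw [← pow_mul, mul_comm k, pow_mul, hroot.pow_eq_one, one_pow]
end
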